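/- arXiv:math/0610959 — 10 statements merged into one kernel-verified Lean document; each statement's English description precedes it below -/
import Mathlib

section
/- Let p be an odd prime and τ, κ units modulo p. Then the sum over all j mod p with Legendre symbol (j/p) = 1 of the Legendre symbol ((τ + jκ)/p) equals -((τ/p) + (κ/p))/2. -/
/-!
Write `χ` for the quadratic character. Since `1 + χ x` is `2` on nonzero squares, `0` on
non-squares and `1` at `0`, twice the sum in question plus `χ τ` equals
`∑ x, χ (τ + x κ) + ∑ x, χ x χ (τ + x κ)`. The first sum is a full character sum after an affine
change of variables, hence `0`; the substitution `x = -(τ / κ) y` turns the second into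
`χ (-κ⁻¹) J(χ, χ⁻¹) = -χ κ`.
-/

open Finset

namespace MulChar

variable {F R : Type*} [Field F] [Fintype F] [CommRing R]

theorem sum_apply_add_mul_eq_zero [IsDomain R] {χ : MulChar F R} (hχ : χ ≠ 1) (a : F) {b : F}
    (hb : b ≠ 0) : ∑ x, χ (a + x * b) = 0 := by
  rw [Fintype.sum_equiv ((Equiv.mulRight₀ b hb).trans (Equiv.addLeft a)) (fun x ↦ χ (a + x * b)) χ
    fun _ ↦ rfl]
  exact sum_eq_zero_of_ne_one hχ

theorem sum_mul_inv_apply_add_mul [IsDomain R] {χ : MulChar F R} (hχ : χ ≠ 1) {a b : F}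
    (ha : a ≠ 0) (hb : b ≠ 0) : ∑ x, χ x * χ⁻¹ (a + x * b) = -χ⁻¹ b := by
  classical
  -- the substitution `x = c * y` turns `a + x * b` into `a * (1 - y)`
  obtain ⟨c, hcb⟩ : ∃ c, c * b = -a := ⟨-a / b, div_mul_cancel₀ _ hb⟩
  have hc : c ≠ 0 := by
    rintro rfl
    exact ha (by simpa using hcb.symm)
  have hcoeff : χ c * χ⁻¹ a * χ (-1) = χ⁻¹ b := by
    simp only [inv_apply', ← map_mul]
    congr 1
    field_simp
    linear_combination -hcb
  calc ∑ x, χ x * χ⁻¹ (a + x * b)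
      = ∑ y, χ (c * y) * χ⁻¹ (a + c * y * b) :=
        (Fintype.sum_equiv (Equiv.mulLeft₀ c hc) _ _ fun _ ↦ rfl).symm
    _ = ∑ y, χ c * χ⁻¹ a * (χ y * χ⁻¹ (1 - y)) := by
        refine sum_congr rfl fun y _ ↦ ?_
        have : a + c * y * b = a * (1 - y) := by linear_combination y * hcb
        rw [this, map_mul, map_mul]
        ring
    _ = χ c * χ⁻¹ a * jacobiSum χ χ⁻¹ := by rw [jacobiSum, mul_sum]
    _ = -χ⁻¹ b := by rw [jacobiSum_nontrivial_inv hχ, ← hcoeff]; ring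

theorem IsQuadratic.sum_one_add_mul [Nontrivial R] {χ : MulChar F R} (hχ : χ.IsQuadratic)
    (f : F → R) [DecidablePred (χ · = 1)] :
    ∑ x, (1 + χ x) * f x = 2 * ∑ x ∈ univ.filter (χ · = 1), f x + f 0 := by
  classical
  have hpoint : ∀ x, (1 + χ x) * f x
      = 2 * (if χ x = 1 then f x else 0) + (if x = 0 then f 0 else 0) := by
    intro x
    by_cases hx : x = 0
    · subst hx; simp
    by_cases h1 : χ x = 1
    · rw [if_pos h1, if_neg hx, h1]
      ring
    have hneg : χ x = -1 := by
      rcases hχ x with h | h | h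
      · exact absurd h ((isUnit_iff_ne_zero.mpr hx).map χ).ne_zero
      · exact absurd h h1
      · exact h
    rw [if_neg h1, if_neg hx, hneg]
    ring
  simp only [hpoint, sum_add_distrib, ← mul_sum, sum_ite_eq', mem_univ, if_true, sum_filter]

theorem sum_units_filter_eq_sum_filter [DecidableEq F] [Nontrivial R] (χ : MulChar F R) (g : F → R)
    [DecidablePred (χ · = 1)] [DecidablePred fun u : Fˣ ↦ χ u = 1] :
    ∑ u ∈ univ.filter fun u : Fˣ ↦ χ u = 1, g u = ∑ x ∈ univ.filter (χ · = 1), g x := by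
  refine sum_bij (fun u _ ↦ (u : F)) (fun u hu ↦ by simpa using hu)
    (fun _ _ _ _ h ↦ Units.ext h) (fun x hx ↦ ?_) fun _ _ ↦ rfl
  have hx0 : x ≠ 0 := by
    rintro rfl
    simp at hx
  exact ⟨Units.mk0 x hx0, by simpa using hx, rfl⟩

end MulChar

theorem legendreSym_val_eq_quadraticChar (p : ℕ) [Fact p.Prime] (x : ZMod p) :
    legendreSym p (x.val : ℤ) = quadraticChar (ZMod p) x := by
  simp [legendreSym]

theorem two_mul_sum_filter_quadraticChar_add_mul {F : Type*} [Field F] [Fintype F] [DecidableEq F]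
    (hF : ringChar F ≠ 2) {a b : F} (ha : a ≠ 0) (hb : b ≠ 0) :
    2 * ∑ x ∈ univ.filter (quadraticChar F · = 1), quadraticChar F (a + x * b)
      = -(quadraticChar F a + quadraticChar F b) := by
  set χ := quadraticChar F
  have hχ : χ ≠ 1 := quadraticChar_ne_one hF
  have htwisted := MulChar.sum_mul_inv_apply_add_mul hχ ha hb
  rw [(quadraticChar_isQuadratic F).inv] at htwisted
  have htotal : ∑ x, (1 + χ x) * χ (a + x * b) = -χ b := by
    simp only [add_mul, one_mul, sum_add_distrib, MulChar.sum_apply_add_mul_eq_zero hχ a hb,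
      zero_add]
    exact htwisted
  rw [(quadraticChar_isQuadratic F).sum_one_add_mul, zero_mul, add_zero] at htotal
  linear_combination htotal

theorem stmt_0 (p : ℕ) [Fact p.Prime] (hp : p ≠ 2) (τ κ : (ZMod p)ˣ) :
    ∑ j ∈ Finset.univ.filter
        (fun j : (ZMod p)ˣ => legendreSym p (((j : ZMod p).val : ℤ)) = 1),
      legendreSym p ((((τ : ZMod p) + (j : ZMod p) * (κ : ZMod p)).val : ℤ)) =
    -((legendreSym p (((τ : ZMod p).val : ℤ)) + legendreSym p (((κ : ZMod p).val : ℤ))) / 2) := by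
  have hF : ringChar (ZMod p) ≠ 2 := by rwa [ZMod.ringChar_zmod_n]
  simp only [legendreSym_val_eq_quadraticChar]
  rw [MulChar.sum_units_filter_eq_sum_filter _ fun x ↦ quadraticChar (ZMod p) (τ + x * κ)]
  have htwice := two_mul_sum_filter_quadraticChar_add_mul hF τ.ne_zero κ.ne_zero
  omega
end

section
/- Let p be an odd prime, m ≥ 1, and let A = (a,b;c,d) be a matrix over ℤ/p^mℤ whose discriminant (a+d)² - 4(ad - bc) is divisible by p and which is nonscalar modulo p. Then at least one of -b and c is a unit mod p, and if both are units then the Legendre symbols (-b/p) and (c/p) agree. -/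
/-!
Reduce mod `p`. Since `(a + d)² - 4(ad - bc) = (a - d)² - 4(-b)c`, a vanishing discriminant says
`(-b)c = ((a - d)/2)²`. If `b` and `c` both vanished mod `p` this would force `a = d` mod `p`,
i.e. `A` scalar mod `p`; if both are units, `(-b)c` is a nonzero square, so `(-b/p)(c/p) = 1`.
-/

theorem eq_of_discr_eq_zero_of_offDiag_eq_zero {R : Type*} [CommRing R] [IsReduced R]
    {a b c d : R} (hdisc : (a + d) ^ 2 - 4 * (a * d - b * c) = 0) (hb : b = 0) (hc : c = 0) :
    a = d := by
  have hsq : (a - d) ^ 2 = 0 := by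
    subst hb hc
    linear_combination hdisc
  exact sub_eq_zero.mp (IsNilpotent.eq_zero ⟨2, hsq⟩)

theorem isSquare_neg_mul_of_discr_eq_zero {K : Type*} [Field K] (h2 : (2 : K) ≠ 0)
    {a b c d : K} (hdisc : (a + d) ^ 2 - 4 * (a * d - b * c) = 0) : IsSquare (-b * c) :=
  ⟨(a - d) / 2, by field_simp; linear_combination -hdisc⟩

theorem quadraticChar_eq_of_isSquare_mul {F : Type*} [Field F] [Fintype F] [DecidableEq F]
    {u v : F} (hu : u ≠ 0) (hv : v ≠ 0) (huv : IsSquare (u * v)) :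
    quadraticChar F u = quadraticChar F v := by
  have hprod : quadraticChar F u * quadraticChar F v = 1 := by
    rw [← map_mul, quadraticChar_one_iff_isSquare (mul_ne_zero hu hv)]
    exact huv
  calc quadraticChar F u = quadraticChar F u * (quadraticChar F v) ^ 2 := by
        rw [quadraticChar_sq_one hv, mul_one]
    _ = (quadraticChar F u * quadraticChar F v) * quadraticChar F v := by ring
    _ = quadraticChar F v := by rw [hprod, one_mul]

theorem stmt_6 (p m : ℕ) [Fact p.Prime] (hp : p ≠ 2) (hm : m ≠ 0)
    (a b c d : ZMod (p ^ m))
    (hdisc : ZMod.castHom (dvd_pow_self p hm) (ZMod p) ((a + d) ^ 2 - 4 * (a * d - b * c)) = 0)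
    (hns : ¬ (ZMod.castHom (dvd_pow_self p hm) (ZMod p) b = 0 ∧
              ZMod.castHom (dvd_pow_self p hm) (ZMod p) c = 0 ∧
              ZMod.castHom (dvd_pow_self p hm) (ZMod p) a =
                ZMod.castHom (dvd_pow_self p hm) (ZMod p) d)) :
    (IsUnit (ZMod.castHom (dvd_pow_self p hm) (ZMod p) (-b)) ∨
      IsUnit (ZMod.castHom (dvd_pow_self p hm) (ZMod p) c)) ∧
    (IsUnit (ZMod.castHom (dvd_pow_self p hm) (ZMod p) (-b)) →
      IsUnit (ZMod.castHom (dvd_pow_self p hm) (ZMod p) c) →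
      quadraticChar (ZMod p) (ZMod.castHom (dvd_pow_self p hm) (ZMod p) (-b)) =
        quadraticChar (ZMod p) (ZMod.castHom (dvd_pow_self p hm) (ZMod p) c)) := by
  set f := ZMod.castHom (dvd_pow_self p hm) (ZMod p)
  have hdisc' : (f a + f d) ^ 2 - 4 * (f a * f d - f b * f c) = 0 := by
    simpa only [map_sub, map_add, map_mul, map_pow, map_ofNat] using hdisc
  simp only [isUnit_iff_ne_zero, map_neg, neg_ne_zero]
  refine ⟨?_, fun hb hc => ?_⟩
  · by_contra! hbc
    exact hns ⟨hbc.1, hbc.2, eq_of_discr_eq_zero_of_offDiag_eq_zero hdisc' hbc.1 hbc.2⟩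
  · have h2 : (2 : ZMod p) ≠ 0 := Ring.two_ne_zero (by rwa [ZMod.ringChar_zmod_n])
    exact quadraticChar_eq_of_isSquare_mul (neg_ne_zero.mpr hb) hc
      (isSquare_neg_mul_of_discr_eq_zero h2 hdisc')
end

section
/- Let K be a positive integer and A, B ∈ M₂(ℤ/Kℤ) matrices such that for every prime p dividing K, neither A nor B reduces to a scalar matrix mod p. Then A and B are GL₂(ℤ/Kℤ)-conjugate if and only if tr A = tr B and det A = det B. -/
/-!
The argument works over any commutative ring `R` with finitely many maximal ideals. If `M` is
nonscalar modulo a maximal ideal `m`, then one of `e₀`, `e₁`, `e₀ + e₁` is a cyclic vector of `M`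
modulo `m`, i.e. `det (v, M v) ∉ m`. The Chinese remainder theorem glues these local choices into
one `v` with `det (v, M v)` a unit. In the basis `(v, M v)` the matrix `M` becomes, by
Cayley–Hamilton, the companion matrix `!![0, -det M; 1, tr M]`, which depends only on the trace
and determinant.
-/

open Matrix

/-- A matrix over `ℤ/Kℤ` is nonscalar modulo `p` (for `p ∣ K`) if its reduction
mod `p` is not a scalar matrix. -/
def NonscalarMod {K : ℕ} (p : ℕ) (h : p ∣ K) (A : Matrix (Fin 2) (Fin 2) (ZMod K)) : Prop :=
  ¬ ∃ lam : ZMod p, A.map (fun x => ZMod.castHom h (ZMod p) x) =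
      lam • (1 : Matrix (Fin 2) (Fin 2) (ZMod p))

theorem MaximalSpectrum.exists_forall_mk_eq {R : Type*} [CommRing R]
    [Finite (MaximalSpectrum R)] (f : MaximalSpectrum R → R) :
    ∃ x : R, ∀ m : MaximalSpectrum R,
      Ideal.Quotient.mk m.asIdeal x = Ideal.Quotient.mk m.asIdeal (f m) := by
  obtain ⟨y, hy⟩ := Ideal.quotientInfToPiQuotient_surj
    (I := fun m : MaximalSpectrum R => m.asIdeal)
    (fun _ _ hne => MaximalSpectrum.isCoprime_of_ne hne) (fun m => Ideal.Quotient.mk _ (f m))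
  obtain ⟨x, rfl⟩ := Ideal.Quotient.mk_surjective y
  exact ⟨x, congr_fun hy⟩

theorem MvPolynomial.exists_isUnit_eval {R σ : Type*} [CommRing R] [Finite (MaximalSpectrum R)]
    (P : MvPolynomial σ R) (h : ∀ m : MaximalSpectrum R, ∃ v : σ → R, eval v P ∉ m.asIdeal) :
    ∃ v : σ → R, IsUnit (eval v P) := by
  choose w hw using h
  choose v hv using fun i => MaximalSpectrum.exists_forall_mk_eq (fun m => w m i)
  refine ⟨v, not_not.mp fun hv_nonunit => ?_⟩
  obtain ⟨m, hm, hvm⟩ := exists_max_ideal_of_mem_nonunits hv_nonunit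
  have hmk : Ideal.Quotient.mk m (eval v P) = Ideal.Quotient.mk m (eval (w ⟨m, hm⟩) P) := by
    simp only [MvPolynomial.eval, MvPolynomial.coe_eval₂Hom, MvPolynomial.eval₂_comp_left]
    congr 1
    funext i
    exact hv i ⟨m, hm⟩
  refine hw ⟨m, hm⟩ ?_
  rwa [← Ideal.Quotient.eq_zero_iff_mem, ← hmk, Ideal.Quotient.eq_zero_iff_mem]

theorem isConj_iff_exists_units {M : Type*} [Monoid M] {a b : M} :
    IsConj a b ↔ ∃ c : Mˣ, ↑c * a * ↑c⁻¹ = b := by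
  simp only [IsConj, SemiconjBy, Units.mul_inv_eq_iff_eq_mul]

theorem RingHom.map_det_of_mulVec {R S : Type*} [CommRing R] [CommRing S] (f : R →+* S)
    (M : Matrix (Fin 2) (Fin 2) R) (v : Fin 2 → R) :
    f (det (of ![v, M *ᵥ v])) = det (of ![f ∘ v, M.map f *ᵥ (f ∘ v)]) := by
  simp [det_fin_two]

namespace Matrix

variable {R : Type*} [CommRing R]

theorem mul_transpose_of_mulVec (M : Matrix (Fin 2) (Fin 2) R) (v : Fin 2 → R) :
    M * (of ![v, M *ᵥ v])ᵀ = (of ![v, M *ᵥ v])ᵀ * !![0, -M.det; 1, M.trace] := by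
  ext i j
  fin_cases i <;> fin_cases j <;>
    simp [Matrix.mul_apply, Fin.sum_univ_two, det_fin_two, trace_fin_two] <;> ring

theorem exists_det_of_mulVec_ne_zero {M : Matrix (Fin 2) (Fin 2) R}
    (hM : ∀ c : R, M ≠ c • (1 : Matrix (Fin 2) (Fin 2) R)) :
    ∃ v : Fin 2 → R, det (of ![v, M *ᵥ v]) ≠ 0 := by
  by_contra! h
  have h₀ := h ![1, 0]
  have h₁ := h ![0, 1]
  have h₂ := h ![1, 1]
  simp [det_fin_two] at h₀ h₁ h₂
  have h₃ : M 1 1 = M 0 0 := by linear_combination h₂ - h₀ + h₁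
  refine hM (M 0 0) (Matrix.ext fun i j => ?_)
  fin_cases i <;> fin_cases j <;> simp [h₀, h₁, h₃]

variable [Finite (MaximalSpectrum R)]

theorem isConj_companion {M : Matrix (Fin 2) (Fin 2) R}
    (hM : ∀ (m : MaximalSpectrum R) (c : R ⧸ m.asIdeal),
      M.map (Ideal.Quotient.mk m.asIdeal) ≠ c • 1) :
    IsConj !![0, -M.det; 1, M.trace] M := by
  let P : MvPolynomial (Fin 2) R :=
    det (of ![MvPolynomial.X, M.map MvPolynomial.C *ᵥ MvPolynomial.X])
  have eval_P (v : Fin 2 → R) : MvPolynomial.eval v P = det (of ![v, M *ᵥ v]) := by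
    simp only [P, RingHom.map_det_of_mulVec, Matrix.map_map]
    congr <;> ext <;> simp
  obtain ⟨v, hv⟩ := P.exists_isUnit_eval fun m => by
    obtain ⟨v, hv⟩ := exists_det_of_mulVec_ne_zero (hM m)
    obtain ⟨w, rfl⟩ := Ideal.Quotient.mk_surjective.comp_left v
    refine ⟨w, fun hw => hv ?_⟩
    rwa [← RingHom.map_det_of_mulVec, Ideal.Quotient.eq_zero_iff_mem, ← eval_P]
  rw [eval_P, ← det_transpose, ← isUnit_iff_isUnit_det] at hv
  obtain ⟨u, hu⟩ := hv
  exact ⟨u, hu ▸ (mul_transpose_of_mulVec M v).symm⟩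

theorem isConj_iff_trace_eq_and_det_eq {A B : Matrix (Fin 2) (Fin 2) R}
    (hA : ∀ (m : MaximalSpectrum R) (c : R ⧸ m.asIdeal),
      A.map (Ideal.Quotient.mk m.asIdeal) ≠ c • 1)
    (hB : ∀ (m : MaximalSpectrum R) (c : R ⧸ m.asIdeal),
      B.map (Ideal.Quotient.mk m.asIdeal) ≠ c • 1) :
    IsConj A B ↔ A.trace = B.trace ∧ A.det = B.det := by
  constructor
  · rw [isConj_iff_exists_units]
    rintro ⟨g, rfl⟩
    exact ⟨(trace_units_conj g A).symm, (det_units_conj g A).symm⟩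
  · rintro ⟨htr, hdet⟩
    have hA' := isConj_companion hA
    rw [htr, hdet] at hA'
    exact hA'.symm.trans (isConj_companion hB)

end Matrix

theorem ZMod.exists_prime_comp_castHom_eq_mk {K : ℕ} [NeZero K] (m : MaximalSpectrum (ZMod K)) :
    ∃ (p : ℕ) (_ : p.Prime) (h : p ∣ K) (f : ZMod p →+* ZMod K ⧸ m.asIdeal),
      f.comp (ZMod.castHom h (ZMod p)) = Ideal.Quotient.mk m.asIdeal := by
  have := m.isMaximal
  let _ := Ideal.Quotient.field m.asIdeal
  set p := ringChar (ZMod K ⧸ m.asIdeal)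
  have hpK : p ∣ K := by
    rw [← CharP.cast_eq_zero_iff (ZMod K ⧸ m.asIdeal) p, ← map_natCast (Ideal.Quotient.mk _),
      ZMod.natCast_self, map_zero]
  exact ⟨p, CharP.char_is_prime (ZMod K ⧸ m.asIdeal) p, hpK, ZMod.castHom dvd_rfl _,
    RingHom.ext_zmod _ _⟩

theorem map_mk_ne_smul_one_of_nonscalarMod {K : ℕ} [NeZero K]
    {M : Matrix (Fin 2) (Fin 2) (ZMod K)}
    (hM : ∀ p : ℕ, p.Prime → ∀ h : p ∣ K, NonscalarMod p h M) (m : MaximalSpectrum (ZMod K))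
    (c : ZMod K ⧸ m.asIdeal) : M.map (Ideal.Quotient.mk m.asIdeal) ≠ c • 1 := by
  obtain ⟨p, hp, h, f, hf⟩ := ZMod.exists_prime_comp_castHom_eq_mk m
  have hfM : (M.map (ZMod.castHom h (ZMod p))).map f = M.map (Ideal.Quotient.mk m.asIdeal) := by
    rw [Matrix.map_map, ← RingHom.coe_comp, hf]
  intro hc
  have hc₀₀ : f (ZMod.castHom h (ZMod p) (M 0 0)) = c := by
    simpa using congr_fun₂ (hfM.trans hc) 0 0
  have := Fact.mk hp
  refine hM p hp h ⟨ZMod.castHom h (ZMod p) (M 0 0), Matrix.map_injective f.injective ?_⟩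
  change (M.map (ZMod.castHom h (ZMod p))).map f = _
  rw [hfM, hc, ← hc₀₀]
  ext i j
  simp [one_apply, apply_ite f]

theorem stmt_8 (K : ℕ) (hK : 0 < K) (A B : Matrix (Fin 2) (Fin 2) (ZMod K))
    (hA : ∀ p : ℕ, p.Prime → ∀ h : p ∣ K, NonscalarMod p h A)
    (hB : ∀ p : ℕ, p.Prime → ∀ h : p ∣ K, NonscalarMod p h B) :
    (∃ g : GL (Fin 2) (ZMod K),
        (g : Matrix (Fin 2) (Fin 2) (ZMod K)) * A *
          ((g⁻¹ : GL (Fin 2) (ZMod K)) : Matrix (Fin 2) (Fin 2) (ZMod K)) = B) ↔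
      (A.trace = B.trace ∧ A.det = B.det) := by
  have : NeZero K := ⟨hK.ne'⟩
  rw [← isConj_iff_exists_units]
  exact isConj_iff_trace_eq_and_det_eq (map_mk_ne_smul_one_of_nonscalarMod hA)
    (map_mk_ne_smul_one_of_nonscalarMod hB)
end

section
/- Let K be a positive integer and A ∈ M₂(ℤ/Kℤ) a matrix with trace T and determinant D that is nonscalar modulo every prime dividing K. Then there exists a unit ϖ ∈ (ℤ/Kℤ)* such that A is SL₂(ℤ/Kℤ)-conjugate to the matrix (0, -ϖ⁻¹D; ϖ, T). -/
/-!
If `v` is a vector with `det (v, A v) = ϖ` a unit, then the matrix `P` with columns `v` and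
`ϖ⁻¹ A v` has determinant one, and by Cayley–Hamilton `P⁻¹ A P` is `!![0, -ϖ⁻¹ D; ϖ, T]`.
Now `det (v, A v)` is a binary quadratic form in `v` with coefficients `A₁₀`, `A₁₁ - A₀₀` and
`-A₀₁`; these do not all vanish modulo a prime `p ∣ K` because `A` is nonscalar modulo `p`, so
the form is nonzero modulo `p` at one of `(1, 0)`, `(0, 1)`, `(1, 1)`. The Chinese remainder
theorem glues these local choices into a `v` at which the form is nonzero modulo every prime
divisor of `K`, i.e. a unit of `ℤ/Kℤ`.
-/

open Matrix

namespace ZMod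

variable {K : ℕ}

theorem isUnit_of_forall_castHom_ne_zero [NeZero K] {u : ZMod K}
    (h : ∀ p : ℕ, p.Prime → ∀ hp : p ∣ K, castHom hp (ZMod p) u ≠ 0) : IsUnit u := by
  rw [← natCast_zmod_val u, isUnit_iff_coprime]
  refine Nat.coprime_of_dvd fun p hp hpu hpK => h p hp hpK ?_
  rw [← natCast_zmod_val u, map_natCast, natCast_eq_zero_iff]
  exact hpu

theorem exists_forall_castHom_eq (hK : K ≠ 0) (f : ∀ p : ℕ, p.Prime → p ∣ K → ZMod p) :
    ∃ x : ZMod K, ∀ p (hp : p.Prime) (hpK : p ∣ K), castHom hpK (ZMod p) x = f p hp hpK := by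
  classical
  let a : ℕ → ℕ := fun p => if h : p.Prime ∧ p ∣ K then (f p h.1 h.2).val else 0
  obtain ⟨k, hk⟩ := Nat.chineseRemainderOfFinset a id K.primeFactors
    (fun p hp => (Nat.prime_of_mem_primeFactors hp).ne_zero)
    (fun p hp q hq hpq => (Nat.coprime_primes (Nat.prime_of_mem_primeFactors hp)
      (Nat.prime_of_mem_primeFactors hq)).mpr hpq)
  refine ⟨k, fun p hp hpK => ?_⟩
  have : NeZero p := ⟨hp.ne_zero⟩
  have hka : (k : ZMod p) = a p :=
    (natCast_eq_natCast_iff _ _ _).mpr (hk p (Nat.mem_primeFactors.mpr ⟨hp, hpK, hK⟩))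
  rw [map_natCast, hka]
  simp only [a, dif_pos (And.intro hp hpK), natCast_zmod_val]

end ZMod

namespace Matrix

variable {R : Type*} [CommRing R]

def cyclicDet (A : Matrix (Fin 2) (Fin 2) R) (v : Fin 2 → R) : R :=
  !![v 0, (A *ᵥ v) 0; v 1, (A *ᵥ v) 1].det

theorem cyclicDet_eq (A : Matrix (Fin 2) (Fin 2) R) (v : Fin 2 → R) :
    cyclicDet A v = A 1 0 * v 0 ^ 2 + (A 1 1 - A 0 0) * (v 0 * v 1) - A 0 1 * v 1 ^ 2 := by
  simp only [cyclicDet, det_fin_two_of, mulVec, dotProduct, Fin.sum_univ_two]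
  ring

theorem _root_.RingHom.map_cyclicDet {S : Type*} [CommRing S] (f : R →+* S)
    (A : Matrix (Fin 2) (Fin 2) R) (v : Fin 2 → R) :
    f (cyclicDet A v) = cyclicDet (A.map f) (f ∘ v) := by
  simp [cyclicDet_eq]

theorem exists_cyclicDet_ne_zero {A : Matrix (Fin 2) (Fin 2) R}
    (hA : ¬∃ l : R, A = l • 1) : ∃ v, cyclicDet A v ≠ 0 := by
  by_contra! h
  have h10 : A 1 0 = 0 := by simpa [cyclicDet_eq] using h ![1, 0]
  have h01 : A 0 1 = 0 := by simpa [cyclicDet_eq] using h ![0, 1]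
  have h11 : A 1 1 = A 0 0 := by simpa [cyclicDet_eq, h10, h01, sub_eq_zero] using h ![1, 1]
  refine hA ⟨A 0 0, ?_⟩
  ext i j
  fin_cases i <;> fin_cases j <;> simp [h10, h01, h11]

theorem exists_conj_eq_companion_of_isUnit_cyclicDet {A : Matrix (Fin 2) (Fin 2) R}
    {v : Fin 2 → R} (hv : IsUnit (cyclicDet A v)) :
    ∃ (ϖ : Rˣ) (g : SpecialLinearGroup (Fin 2) R),
      (g : Matrix (Fin 2) (Fin 2) R) * A *
        ((g⁻¹ : SpecialLinearGroup (Fin 2) R) : Matrix (Fin 2) (Fin 2) R) =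
      !![0, -((ϖ⁻¹ : Rˣ) : R) * A.det; (ϖ : R), A.trace] := by
  obtain ⟨ϖ, hϖ⟩ := hv
  let P : Matrix (Fin 2) (Fin 2) R := !![v 0, ↑ϖ⁻¹ * (A *ᵥ v) 0; v 1, ↑ϖ⁻¹ * (A *ᵥ v) 1]
  have hP : P.det = 1 := by
    rw [← Units.inv_mul ϖ, hϖ]
    simp only [P, cyclicDet, det_fin_two_of]
    ring
  have hAP : A * P = P * !![0, -((ϖ⁻¹ : Rˣ) : R) * A.det; (ϖ : R), A.trace] := by
    ext i j
    fin_cases i <;> fin_cases j <;>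
      simp only [P, mul_apply, mulVec, dotProduct, Fin.sum_univ_two, of_apply, cons_val',
        cons_val_zero, cons_val_one, cons_val_fin_one, Fin.zero_eta, Fin.mk_one, det_fin_two,
        trace_fin_two]
    · linear_combination (-(A 0 0 * v 0 + A 0 1 * v 1)) * Units.inv_mul ϖ
    · ring
    · linear_combination (-(A 1 0 * v 0 + A 1 1 * v 1)) * Units.inv_mul ϖ
    · ring
  let g : SpecialLinearGroup (Fin 2) R := ⟨P, hP⟩
  refine ⟨ϖ, g⁻¹, ?_⟩
  rw [inv_inv]
  change P.adjugate * A * P = _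
  rw [mul_assoc, hAP, ← mul_assoc, adjugate_mul, hP, one_smul, one_mul]

end Matrix

theorem stmt_9 (K : ℕ) (hK : 0 < K) (A : Matrix (Fin 2) (Fin 2) (ZMod K))
    (hA : ∀ p : ℕ, p.Prime → ∀ h : p ∣ K, NonscalarMod p h A) :
    ∃ (ϖ : (ZMod K)ˣ) (g : Matrix.SpecialLinearGroup (Fin 2) (ZMod K)),
      (g : Matrix (Fin 2) (Fin 2) (ZMod K)) * A *
        ((g⁻¹ : Matrix.SpecialLinearGroup (Fin 2) (ZMod K)) : Matrix (Fin 2) (Fin 2) (ZMod K)) =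
      !![0, -((ϖ⁻¹ : (ZMod K)ˣ) : ZMod K) * A.det; (ϖ : ZMod K), A.trace] := by
  have : NeZero K := ⟨hK.ne'⟩
  choose v hv using fun p (hp : p.Prime) (hpK : p ∣ K) => exists_cyclicDet_ne_zero (hA p hp hpK)
  obtain ⟨x, hx⟩ := ZMod.exists_forall_castHom_eq hK.ne' fun p hp hpK => v p hp hpK 0
  obtain ⟨y, hy⟩ := ZMod.exists_forall_castHom_eq hK.ne' fun p hp hpK => v p hp hpK 1
  refine exists_conj_eq_companion_of_isUnit_cyclicDet (v := ![x, y]) ?_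
  refine ZMod.isUnit_of_forall_castHom_ne_zero fun p hp hpK => ?_
  have hxy : ZMod.castHom hpK (ZMod p) ∘ ![x, y] = v p hp hpK := by
    ext i
    fin_cases i
    exacts [hx p hp hpK, hy p hp hpK]
  rw [RingHom.map_cyclicDet, hxy]
  exact hv p hp hpK
end

section
/- Let p be an odd prime, m ≥ 1, and let φ(x,y) = cx² + (d-a)xy - by² be a binary quadratic form over ℤ/p^mℤ whose discriminant Δ = (a-d)² + 4bc is a unit mod p, and suppose not all of b, c, d-a are divisible by p. Then for every unit ϖ ∈ (ℤ/p^mℤ)*, the congruence φ(x,y) ≡ ϖ mod p^m has a solution. -/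
section Aux

variable {p m : ℕ} [Fact p.Prime]

lemma aux_neZero (p m : ℕ) [Fact p.Prime] : NeZero (p ^ m) :=
  ⟨pow_ne_zero m (Nat.Prime.pos Fact.out).ne'⟩

lemma aux_isUnit (hm : m ≠ 0) (u : ZMod (p ^ m))
    (h : ZMod.castHom (dvd_pow_self p hm) (ZMod p) u ≠ 0) : IsUnit u := by
  haveI := aux_neZero p m
  have key : ZMod.castHom (dvd_pow_self p hm) (ZMod p) u = ((u.val : ℕ) : ZMod p) := by
    rw [ZMod.castHom_apply, ← ZMod.natCast_val]
  have hdvd : ¬ p ∣ u.val := by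
    rw [← ZMod.natCast_eq_zero_iff]
    intro h0
    exact h (by rw [key, h0])
  have hcop : u.val.Coprime (p ^ m) :=
    Nat.Coprime.pow_right _ (((Fact.out : p.Prime).coprime_iff_not_dvd).mpr hdvd).symm
  have := (ZMod.isUnit_iff_coprime u.val (p ^ m)).mpr hcop
  rwa [ZMod.natCast_zmod_val] at this

lemma aux_sq (hp : p ≠ 2) (hm : m ≠ 0) (u : ZMod (p ^ m)) (hu : IsUnit u)
    (hsq : IsSquare (ZMod.castHom (dvd_pow_self p hm) (ZMod p) u)) : IsSquare u := by
  haveI := aux_neZero p m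
  obtain ⟨U, rfl⟩ := hu
  set f := ZMod.unitsMap (dvd_pow_self p hm) with hf
  -- the kernel of f has order p ^ (m-1)
  have hcard : Nat.card f.ker = p ^ (m - 1) := by
    have h1 : Nat.card (ZMod (p ^ m))ˣ = p ^ (m - 1) * (p - 1) := by
      rw [Nat.card_eq_fintype_card, ZMod.card_units_eq_totient,
        Nat.totient_prime_pow Fact.out (Nat.pos_of_ne_zero hm)]
    have h2 : Nat.card ((ZMod (p ^ m))ˣ ⧸ f.ker) = p - 1 := by
      rw [Nat.card_congr (QuotientGroup.quotientKerEquivOfSurjective f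
        (ZMod.unitsMap_surjective _)).toEquiv, Nat.card_eq_fintype_card, ZMod.card_units]
    have h3 := Subgroup.card_eq_card_quotient_mul_card_subgroup f.ker
    rw [h1, h2] at h3
    have hpos : 0 < p - 1 := Nat.sub_pos_of_lt (Fact.out : p.Prime).one_lt
    rw [mul_comm (p - 1)] at h3
    exact (Nat.eq_of_mul_eq_mul_right hpos h3.symm)
  -- write the reduction of U as a square of a unit
  obtain ⟨v, hv⟩ := hsq
  have hvU : IsUnit v := by
    have : IsUnit (v * v) := by
      rw [← hv]; exact (U.isUnit).map (ZMod.castHom (dvd_pow_self p hm) (ZMod p))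
    exact isUnit_of_mul_isUnit_left this
  obtain ⟨W, hW⟩ := ZMod.unitsMap_surjective (dvd_pow_self p hm) hvU.unit
  -- the element U * (W^2)⁻¹ lies in the kernel
  have hker : U * (W ^ 2)⁻¹ ∈ f.ker := by
    have hfU : ((f U : ZMod p)) = v * v := by
      rw [hf, ZMod.unitsMap]; simpa using hv
    have hfW : ((f W : ZMod p)) = v := by rw [hf, hW]; exact hvU.unit_spec
    have hfUW : f U = f W ^ 2 := by
      apply Units.ext
      rw [Units.val_pow_eq_pow_val, hfW, hfU, sq]
    rw [MonoidHom.mem_ker, map_mul, map_inv, map_pow, ← hfUW, mul_inv_cancel]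
  -- elements of the kernel are squares, since the kernel has odd order
  set x : f.ker := ⟨U * (W ^ 2)⁻¹, hker⟩
  have hxpow : x ^ (p ^ (m - 1)) = 1 := by
    rw [← hcard]; exact pow_card_eq_one'
  have hodd : Odd (p ^ (m - 1)) := ((Fact.out : p.Prime).odd_of_ne_two hp).pow
  obtain ⟨k, hk⟩ := hodd
  have hxsq : U * (W ^ 2)⁻¹ = ((U * (W ^ 2)⁻¹) ^ (k + 1)) ^ 2 := by
    have h1 : (U * (W ^ 2)⁻¹) ^ (2 * k + 1) = 1 := by
      have h2 := congrArg Subtype.val hxpow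
      rw [hk] at h2
      simpa using h2
    calc U * (W ^ 2)⁻¹ = (U * (W ^ 2)⁻¹) ^ (2 * k + 1) * (U * (W ^ 2)⁻¹) := by
          rw [h1, one_mul]
      _ = (U * (W ^ 2)⁻¹) ^ (2 * k + 2) := by rw [← pow_succ]
      _ = ((U * (W ^ 2)⁻¹) ^ (k + 1)) ^ 2 := by
          rw [show 2 * k + 2 = (k + 1) * 2 from by ring, pow_mul]
  have : IsSquare U := by
    refine ⟨(U * (W ^ 2)⁻¹) ^ (k + 1) * W, ?_⟩
    calc U = (U * (W ^ 2)⁻¹) * W ^ 2 := (inv_mul_cancel_right U (W ^ 2)).symm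
      _ = ((U * (W ^ 2)⁻¹) ^ (k + 1)) ^ 2 * W ^ 2 := by rw [← hxsq]
      _ = ((U * (W ^ 2)⁻¹) ^ (k + 1) * W) * ((U * (W ^ 2)⁻¹) ^ (k + 1) * W) := by
          rw [← mul_pow ((U * (W ^ 2)⁻¹) ^ (k + 1)) W 2, sq]
  obtain ⟨r, hr⟩ := this
  exact ⟨(r : ZMod (p ^ m)), by rw [hr]; rfl⟩

lemma aux_rep (hp : p ≠ 2) (hm : m ≠ 0) (s t : ZMod (p ^ m))
    (hs : IsUnit s) (ht : IsUnit t) : ∃ x y : ZMod (p ^ m), x ^ 2 + s * y ^ 2 = t := by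
  haveI := aux_neZero p m
  haveI : NeZero p := ⟨(Fact.out : p.Prime).pos.ne'⟩
  set π := ZMod.castHom (dvd_pow_self p hm) (ZMod p) with hπ
  have hps : π s ≠ 0 := (hs.map π).ne_zero
  have hpodd : Fintype.card (ZMod p) % 2 = 1 := by
    rw [ZMod.card]
    exact Nat.odd_iff.mp ((Fact.out : p.Prime).odd_of_ne_two hp)
  obtain ⟨A, B, hAB⟩ := FiniteField.exists_root_sum_quadratic
    (f := Polynomial.X ^ 2 - Polynomial.C (π t)) (g := Polynomial.C (π s) * Polynomial.X ^ 2)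
    (by simpa using Polynomial.degree_X_pow_sub_C (by norm_num : 0 < 2) (π t))
    (by rw [Polynomial.degree_C_mul_X_pow _ hps]; rfl) hpodd
  simp only [Polynomial.eval_add, Polynomial.eval_sub, Polynomial.eval_mul, Polynomial.eval_pow,
    Polynomial.eval_X, Polynomial.eval_C] at hAB
  have hABeq : A ^ 2 + π s * B ^ 2 = π t := by linear_combination hAB
  by_cases hA : A = 0
  · -- then π s * B ^ 2 = π t, so t / s is a square
    have hB : B ≠ 0 := by
      intro hB0
      apply (ht.map π).ne_zero
      rw [← hABeq, hA, hB0]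
      ring
    set u : ZMod (p ^ m) := ↑hs.unit⁻¹ * t with hu
    have hui : IsUnit u := (hs.unit⁻¹).isUnit.mul ht
    have hπu : π u = B ^ 2 := by
      have hcan : π s * π u = π s * B ^ 2 := by
        have h1 : s * u = t := by
          rw [hu, ← mul_assoc, IsUnit.mul_val_inv, one_mul]
        rw [← map_mul, h1, ← hABeq, hA]
        ring
      exact (hs.map π).mul_left_cancel hcan
    have : IsSquare u := aux_sq hp hm u hui ⟨B, by rw [hπu, sq]⟩
    obtain ⟨r, hr⟩ := this
    refine ⟨0, r, ?_⟩
    have h1 : s * u = t := by rw [hu, ← mul_assoc, IsUnit.mul_val_inv, one_mul]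
    rw [← h1, hr]
    ring
  · -- lift B to y, then t - s y² is a unit square
    set y : ZMod (p ^ m) := ((B.val : ℕ) : ZMod (p ^ m)) with hy
    have hπy : π y = B := by
      rw [hy, map_natCast, ZMod.natCast_zmod_val]
    set u : ZMod (p ^ m) := t - s * y ^ 2 with hu
    have hπu : π u = A ^ 2 := by
      rw [hu, map_sub, map_mul, map_pow, hπy, ← hABeq]
      ring
    have hui : IsUnit u := by
      apply aux_isUnit hm
      rw [← hπ, hπu]
      exact pow_ne_zero 2 hA
    have : IsSquare u := aux_sq hp hm u hui (by rw [← hπ, hπu]; exact ⟨A, sq A⟩)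
    obtain ⟨r, hr⟩ := this
    exact ⟨r, y, by rw [sq, ← hr, hu]; ring⟩

lemma aux_two_unit (hp : p ≠ 2) (_hm : m ≠ 0) : IsUnit (2 : ZMod (p ^ m)) := by
  have : ((2 : ℕ) : ZMod (p ^ m)) = (2 : ZMod (p ^ m)) := by norm_num
  rw [← this, ZMod.isUnit_iff_coprime]
  exact Nat.Coprime.pow_right _
    (Nat.coprime_two_left.mpr ((Fact.out : p.Prime).odd_of_ne_two hp))

lemma aux_key (hp : p ≠ 2) (hm : m ≠ 0) (b c e : ZMod (p ^ m))
    (hΔ : IsUnit (e ^ 2 + 4 * b * c)) (hbc : IsUnit b ∨ IsUnit c)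
    (w : ZMod (p ^ m)) (hw : IsUnit w) :
    ∃ x y : ZMod (p ^ m), c * x ^ 2 + e * x * y - b * y ^ 2 = w := by
  have h2 : IsUnit (2 : ZMod (p ^ m)) := aux_two_unit hp hm
  have h4 : IsUnit (4 : ZMod (p ^ m)) := by
    have : (4 : ZMod (p ^ m)) = 2 * 2 := by norm_num
    rw [this]; exact h2.mul h2
  rcases hbc with hb | hc
  · -- b is a unit : multiply by -4b
    have h4b : IsUnit (-(4 * b)) := (h4.mul hb).neg
    obtain ⟨A, B, hAB⟩ := aux_rep hp hm (-(e ^ 2 + 4 * b * c)) (-(4 * b) * w) hΔ.neg (h4b.mul hw)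
    have h2b : IsUnit (2 * b) := h2.mul hb
    set i : ZMod (p ^ m) := ↑h2b.unit⁻¹ with hi
    have hinv : (2 * b) * i = 1 := IsUnit.mul_val_inv h2b
    refine ⟨B, i * (A + e * B), ?_⟩
    have hcan : (-(4 * b)) * (c * B ^ 2 + e * B * (i * (A + e * B)) - b * (i * (A + e * B)) ^ 2)
        = (-(4 * b)) * w := by
      linear_combination ((A + e * B) ^ 2 * ((2 * b) * i + 1) - 2 * e * B * (A + e * B)) * hinv
        + hAB
    exact h4b.mul_left_cancel hcan
  · -- c is a unit : multiply by 4c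
    have h4c : IsUnit (4 * c) := h4.mul hc
    obtain ⟨A, B, hAB⟩ := aux_rep hp hm (-(e ^ 2 + 4 * b * c)) (4 * c * w) hΔ.neg (h4c.mul hw)
    have h2c : IsUnit (2 * c) := h2.mul hc
    set i : ZMod (p ^ m) := ↑h2c.unit⁻¹ with hi
    have hinv : (2 * c) * i = 1 := IsUnit.mul_val_inv h2c
    refine ⟨i * (A - e * B), B, ?_⟩
    have hcan : (4 * c) * (c * (i * (A - e * B)) ^ 2 + e * (i * (A - e * B)) * B - b * B ^ 2)
        = (4 * c) * w := by
      linear_combination ((A - e * B) ^ 2 * ((2 * c) * i + 1) + 2 * e * (A - e * B) * B) * hinv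
        + hAB
    exact h4c.mul_left_cancel hcan


end Aux

theorem stmt_10 (p m : ℕ) [Fact p.Prime] (hp : p ≠ 2) (hm : m ≠ 0)
    (a b c d : ZMod (p ^ m))
    (hdisc : IsUnit (ZMod.castHom (dvd_pow_self p hm) (ZMod p) ((a - d) ^ 2 + 4 * b * c)))
    (hns : ¬ (ZMod.castHom (dvd_pow_self p hm) (ZMod p) b = 0 ∧
              ZMod.castHom (dvd_pow_self p hm) (ZMod p) c = 0 ∧
              ZMod.castHom (dvd_pow_self p hm) (ZMod p) (d - a) = 0)) :
    ∀ ϖ : (ZMod (p ^ m))ˣ, ∃ x y : ZMod (p ^ m),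
      c * x ^ 2 + (d - a) * x * y - b * y ^ 2 = (ϖ : ZMod (p ^ m)) := by
  intro ϖ
  set π := ZMod.castHom (dvd_pow_self p hm) (ZMod p) with hπ
  have hΔ : IsUnit ((d - a) ^ 2 + 4 * b * c) := by
    apply aux_isUnit hm
    have : (d - a) ^ 2 + 4 * b * c = (a - d) ^ 2 + 4 * b * c := by ring
    rw [← hπ, this]
    exact hdisc.ne_zero
  have hw : IsUnit (ϖ : ZMod (p ^ m)) := ϖ.isUnit
  by_cases hb : π b ≠ 0
  · exact aux_key hp hm b c (d - a) hΔ (Or.inl (aux_isUnit hm b hb)) _ hw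
  by_cases hc : π c ≠ 0
  · exact aux_key hp hm b c (d - a) hΔ (Or.inr (aux_isUnit hm c hc)) _ hw
  push_neg at hb hc
  have he : π (d - a) ≠ 0 := by
    intro he0
    exact hns ⟨hb, hc, he0⟩
  -- substitute x ↦ x + y
  have hb' : IsUnit (b - c - (d - a)) := by
    apply aux_isUnit hm
    have he' : π d - π a ≠ 0 := by rwa [map_sub] at he
    rw [← hπ]
    simp only [map_sub, hb, hc, zero_sub, sub_zero]
    exact fun h0 => he' (by linear_combination -h0)
  have hΔ' : IsUnit ((2 * c + (d - a)) ^ 2 + 4 * (b - c - (d - a)) * c) := by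
    have : (2 * c + (d - a)) ^ 2 + 4 * (b - c - (d - a)) * c
        = (d - a) ^ 2 + 4 * b * c := by ring
    rw [this]; exact hΔ
  obtain ⟨x, y, hxy⟩ := aux_key hp hm (b - c - (d - a)) c (2 * c + (d - a)) hΔ'
    (Or.inl hb') _ hw
  exact ⟨x + y, y, by linear_combination hxy⟩
end

section
/- Every matrix F ∈ M₂(ℤ/Nℤ) can be uniquely written as F = λI + M·A where M is the largest divisor of N such that F is scalar modulo M, λ ∈ {0,1,...,M-1}, and A ∈ M₂(ℤ/(N/M)ℤ) is nonscalar modulo every prime dividing N/M. -/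
open Matrix

lemma aux_cast_zero_iff {N d : ℕ} [NeZero N] [NeZero d] (h : d ∣ N) (x : ZMod N) :
    ZMod.castHom h (ZMod d) x = 0 ↔ d ∣ x.val := by
  conv_lhs => rw [← ZMod.natCast_zmod_val x, map_natCast]
  exact ZMod.natCast_eq_zero_iff x.val d

lemma aux_scalar_iff {R : Type*} [CommRing R] (G : Matrix (Fin 2) (Fin 2) R) :
    (∃ μ : R, G = μ • (1 : Matrix (Fin 2) (Fin 2) R)) ↔
      G 0 1 = 0 ∧ G 1 0 = 0 ∧ G 0 0 = G 1 1 := by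
  constructor
  · rintro ⟨μ, rfl⟩
    simp [Matrix.smul_apply, Matrix.one_apply]
  · rintro ⟨h1, h2, h3⟩
    refine ⟨G 0 0, ?_⟩
    ext i j
    fin_cases i <;> fin_cases j <;>
      simp [Matrix.smul_apply, Matrix.one_apply, h1, h2, h3]

/-- The largest divisor of `N` modulo which `F` is scalar. -/
def bigM (N : ℕ) (F : Matrix (Fin 2) (Fin 2) (ZMod N)) : ℕ :=
  N.gcd ((F 0 1).val.gcd ((F 1 0).val.gcd (F 0 0 - F 1 1).val))

lemma bigM_dvd (N : ℕ) (F : Matrix (Fin 2) (Fin 2) (ZMod N)) : bigM N F ∣ N :=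
  Nat.gcd_dvd_left _ _

lemma aux_scalar_iff_dvd {N : ℕ} [NeZero N] (F : Matrix (Fin 2) (Fin 2) (ZMod N))
    {d : ℕ} (h : d ∣ N) :
    (∃ μ : ZMod d, F.map (fun x => ZMod.castHom h (ZMod d) x) =
        μ • (1 : Matrix (Fin 2) (Fin 2) (ZMod d))) ↔ d ∣ bigM N F := by
  haveI : NeZero d := ⟨fun hd => (NeZero.ne N) (Nat.eq_zero_of_zero_dvd (hd ▸ h))⟩
  rw [aux_scalar_iff]
  simp only [Matrix.map_apply]
  have h3 : (ZMod.castHom h (ZMod d) (F 0 0) = ZMod.castHom h (ZMod d) (F 1 1)) ↔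
      d ∣ (F 0 0 - F 1 1).val := by
    rw [← sub_eq_zero, ← map_sub, aux_cast_zero_iff h]
  rw [aux_cast_zero_iff h, aux_cast_zero_iff h, h3]
  unfold bigM
  rw [Nat.dvd_gcd_iff, Nat.dvd_gcd_iff, Nat.dvd_gcd_iff]
  have : d ∣ N := h
  tauto

/-- The decomposition `F = λ·I + M·A` of a matrix `F` over `ℤ/Nℤ`, where `M` is the
largest divisor of `N` such that `F` is scalar modulo `M`, `0 ≤ λ < M`, and
`A` is a matrix over `ℤ/(N/M)ℤ` that is nonscalar modulo every prime dividing `N/M`. -/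
structure ScalarDecomp (N : ℕ) (F : Matrix (Fin 2) (Fin 2) (ZMod N)) where
  M : ℕ
  lam : ℕ
  A : Matrix (Fin 2) (Fin 2) (ZMod (N / M))
  hMdvd : M ∣ N
  hlam : lam < M
  heq : F = (lam : ZMod N) • (1 : Matrix (Fin 2) (Fin 2) (ZMod N)) +
      (M : ZMod N) • A.map (fun x => ((x.val : ℕ) : ZMod N))
  hmax : ∀ M' : ℕ, ∀ h : M' ∣ N,
    (∃ μ : ZMod M', F.map (fun x => ZMod.castHom h (ZMod M') x) =
        μ • (1 : Matrix (Fin 2) (Fin 2) (ZMod M'))) → M' ∣ M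
  hns : ∀ p : ℕ, p.Prime → ∀ h : p ∣ N / M,
    ¬ ∃ μ : ZMod p, A.map (fun x => ZMod.castHom h (ZMod p) x) =
        μ • (1 : Matrix (Fin 2) (Fin 2) (ZMod p))

lemma aux_decomp_entry {N : ℕ} {F : Matrix (Fin 2) (Fin 2) (ZMod N)} (D : ScalarDecomp N F)
    (i j : Fin 2) :
    F i j = (D.lam : ZMod N) * (1 : Matrix (Fin 2) (Fin 2) (ZMod N)) i j
      + (D.M : ZMod N) * ((D.A i j).val : ZMod N) := by
  conv_lhs => rw [D.heq]
  simp [Matrix.add_apply, Matrix.smul_apply, Matrix.map_apply]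

lemma aux_decomp_scalar {N : ℕ} [NeZero N] {F : Matrix (Fin 2) (Fin 2) (ZMod N)}
    (D : ScalarDecomp N F) :
    ∃ μ : ZMod D.M, F.map (fun x => ZMod.castHom D.hMdvd (ZMod D.M) x) =
        μ • (1 : Matrix (Fin 2) (Fin 2) (ZMod D.M)) := by
  refine ⟨(D.lam : ZMod D.M), ?_⟩
  ext i j
  rw [Matrix.map_apply, aux_decomp_entry D i j, map_add, _root_.map_mul, _root_.map_mul,
    map_natCast, map_natCast, ZMod.natCast_self, zero_mul, add_zero, Matrix.smul_apply,
    smul_eq_mul]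
  by_cases hij : i = j
  · subst hij; rw [Matrix.one_apply_eq, _root_.map_one, Matrix.one_apply_eq]
  · simp [Matrix.one_apply, hij]

lemma aux_M_eq {N : ℕ} [NeZero N] {F : Matrix (Fin 2) (Fin 2) (ZMod N)}
    (D : ScalarDecomp N F) : D.M = bigM N F :=
  Nat.dvd_antisymm ((aux_scalar_iff_dvd F D.hMdvd).mp (aux_decomp_scalar D))
    (D.hmax _ (bigM_dvd N F) ((aux_scalar_iff_dvd F (bigM_dvd N F)).mpr dvd_rfl))

lemma aux_lam_eq {N : ℕ} [NeZero N] {F : Matrix (Fin 2) (Fin 2) (ZMod N)}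
    (D : ScalarDecomp N F) : D.lam = (F 0 0).val % D.M := by
  have hMpos : 0 < D.M := lt_of_le_of_lt (Nat.zero_le _) D.hlam
  haveI : NeZero D.M := ⟨hMpos.ne'⟩
  have hv : ZMod.castHom D.hMdvd (ZMod D.M) (F 0 0) = ((F 0 0).val : ZMod D.M) := by
    conv_lhs => rw [← ZMod.natCast_zmod_val (F 0 0), map_natCast]
  have hl : ZMod.castHom D.hMdvd (ZMod D.M) (F 0 0) = (D.lam : ZMod D.M) := by
    rw [aux_decomp_entry D 0 0, map_add, _root_.map_mul, _root_.map_mul,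
      map_natCast, map_natCast, ZMod.natCast_self, zero_mul, add_zero,
      Matrix.one_apply_eq, _root_.map_one, mul_one]
  have h2 : ((D.lam : ℕ) : ZMod D.M) = ((F 0 0).val : ZMod D.M) := hl.symm.trans hv
  have h3 : D.lam % D.M = (F 0 0).val % D.M := (ZMod.natCast_eq_natCast_iff _ _ _).mp h2
  rw [← h3, Nat.mod_eq_of_lt D.hlam]

theorem stmt_11 (N : ℕ) (hN : 0 < N) (F : Matrix (Fin 2) (Fin 2) (ZMod N)) :
    Nonempty (ScalarDecomp N F) ∧ Subsingleton (ScalarDecomp N F) := by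
  haveI : NeZero N := ⟨hN.ne'⟩
  set Mv := bigM N F with hMv
  have hMdvd : Mv ∣ N := bigM_dvd N F
  have hMpos : 0 < Mv := Nat.pos_of_dvd_of_pos hMdvd hN
  haveI : NeZero Mv := ⟨hMpos.ne'⟩
  have hNM : Mv * (N / Mv) = N := Nat.mul_div_cancel' hMdvd
  have hNMpos : 0 < N / Mv := Nat.div_pos (Nat.le_of_dvd hN hMdvd) hMpos
  haveI : NeZero (N / Mv) := ⟨hNMpos.ne'⟩
  set lam := (F 0 0).val % Mv with hlamdef
  have hlam : lam < Mv := Nat.mod_lt _ hMpos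
  obtain ⟨μ0, hμ0⟩ := (aux_scalar_iff_dvd F hMdvd).mpr dvd_rfl
  have hμ0' : ∀ i j : Fin 2, ZMod.castHom hMdvd (ZMod Mv) (F i j) =
      μ0 * (1 : Matrix (Fin 2) (Fin 2) (ZMod Mv)) i j := by
    intro i j
    have := congrFun (congrFun hμ0 i) j
    simpa [Matrix.map_apply, Matrix.smul_apply] using this
  have hlamμ : (lam : ZMod Mv) = μ0 := by
    have h00 := hμ0' 0 0
    simp only [Matrix.one_apply_eq, mul_one] at h00
    rw [hlamdef, ZMod.natCast_mod, ← h00]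
    conv_rhs => rw [← ZMod.natCast_zmod_val (F 0 0), map_natCast]
  have hkey : ∀ i j : Fin 2,
      Mv ∣ (F i j - (lam : ZMod N) * (1 : Matrix (Fin 2) (Fin 2) (ZMod N)) i j).val := by
    intro i j
    rw [← aux_cast_zero_iff hMdvd]
    rw [map_sub, hμ0' i j, _root_.map_mul, map_natCast, hlamμ]
    by_cases hij : i = j
    · subst hij
      rw [Matrix.one_apply_eq, Matrix.one_apply_eq, _root_.map_one, mul_one, sub_self]
    · simp [Matrix.one_apply, hij]
  set A : Matrix (Fin 2) (Fin 2) (ZMod (N / Mv)) :=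
    Matrix.of fun i j =>
      (((F i j - (lam : ZMod N) * (1 : Matrix (Fin 2) (Fin 2) (ZMod N)) i j).val / Mv : ℕ)
        : ZMod (N / Mv)) with hA
  have hentry : ∀ i j : Fin 2, Mv * (A i j).val =
      (F i j - (lam : ZMod N) * (1 : Matrix (Fin 2) (Fin 2) (ZMod N)) i j).val := by
    intro i j
    set v := (F i j - (lam : ZMod N) * (1 : Matrix (Fin 2) (Fin 2) (ZMod N)) i j).val with hv
    have hvN : v < N := ZMod.val_lt _
    have hMk : Mv * (v / Mv) = v := Nat.mul_div_cancel' (hkey i j)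
    have hklt : v / Mv < N / Mv := by
      apply Nat.lt_of_mul_lt_mul_left (a := Mv)
      rw [hMk, hNM]; exact hvN
    have hAij : A i j = ((v / Mv : ℕ) : ZMod (N / Mv)) := rfl
    rw [hAij, ZMod.val_natCast_of_lt hklt, hMk]
  have hFnat : ∀ i j : Fin 2, F i j =
      ((lam * (if i = j then 1 else 0) + Mv * (A i j).val : ℕ) : ZMod N) := by
    intro i j
    have h1 : ((Mv * (A i j).val : ℕ) : ZMod N) =
        F i j - (lam : ZMod N) * (1 : Matrix (Fin 2) (Fin 2) (ZMod N)) i j := by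
      rw [hentry i j, ZMod.natCast_zmod_val]
    have h2 : ((lam * (if i = j then 1 else 0) : ℕ) : ZMod N) =
        (lam : ZMod N) * (1 : Matrix (Fin 2) (Fin 2) (ZMod N)) i j := by
      by_cases hij : i = j <;> simp [hij, Matrix.one_apply]
    rw [Nat.cast_add, h2, h1]
    ring
  have castF : ∀ {d : ℕ} (hd : d ∣ N) (i j : Fin 2),
      ZMod.castHom hd (ZMod d) (F i j) =
        ((lam * (if i = j then 1 else 0) + Mv * (A i j).val : ℕ) : ZMod d) := by
    intro d hd i j
    rw [hFnat i j, map_natCast]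
  have heq : F = (lam : ZMod N) • (1 : Matrix (Fin 2) (Fin 2) (ZMod N)) +
      (Mv : ZMod N) • A.map (fun x => ((x.val : ℕ) : ZMod N)) := by
    ext i j
    simp only [Matrix.add_apply, Matrix.smul_apply, Matrix.map_apply, smul_eq_mul]
    rw [hFnat i j]
    push_cast
    by_cases hij : i = j <;> simp [hij, Matrix.one_apply]
  have hmax : ∀ M' : ℕ, ∀ h : M' ∣ N,
      (∃ μ : ZMod M', F.map (fun x => ZMod.castHom h (ZMod M') x) =
          μ • (1 : Matrix (Fin 2) (Fin 2) (ZMod M'))) → M' ∣ Mv :=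
    fun _ h hex => (aux_scalar_iff_dvd F h).mp hex
  have hns : ∀ p : ℕ, p.Prime → ∀ h : p ∣ N / Mv,
      ¬ ∃ μ : ZMod p, A.map (fun x => ZMod.castHom h (ZMod p) x) =
          μ • (1 : Matrix (Fin 2) (Fin 2) (ZMod p)) := by
    rintro p hp hpd ⟨μ, hμ⟩
    haveI : NeZero p := ⟨hp.pos.ne'⟩
    have hMp : Mv * p ∣ N := by
      conv_rhs => rw [← hNM]
      exact mul_dvd_mul_left Mv hpd
    have hAval : ∀ i j : Fin 2, (A i j).val ≡ μ.val * (if i = j then 1 else 0) [MOD p] := by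
      intro i j
      have h0 := congrFun (congrFun hμ i) j
      simp only [Matrix.map_apply, Matrix.smul_apply, smul_eq_mul] at h0
      have hc : (((A i j).val : ℕ) : ZMod p) =
          ((μ.val * (if i = j then 1 else 0) : ℕ) : ZMod p) := by
        conv_lhs => rw [← map_natCast (ZMod.castHom hpd (ZMod p)), ZMod.natCast_zmod_val]
        rw [h0]
        by_cases hij : i = j <;> simp [hij, Matrix.one_apply, ZMod.natCast_zmod_val]
      exact (ZMod.natCast_eq_natCast_iff _ _ _).mp hc
    have h00 : (A 0 0).val ≡ μ.val [MOD p] := by simpa using hAval 0 0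
    have h11 : (A 1 1).val ≡ μ.val [MOD p] := by simpa using hAval 1 1
    have h01 : p ∣ (A 0 1).val := by
      have := hAval 0 1
      simpa [Nat.modEq_zero_iff_dvd] using this
    have h10 : p ∣ (A 1 0).val := by
      have := hAval 1 0
      simpa [Nat.modEq_zero_iff_dvd] using this
    have hsc : ∃ μ' : ZMod (Mv * p),
        F.map (fun x => ZMod.castHom hMp (ZMod (Mv * p)) x) =
          μ' • (1 : Matrix (Fin 2) (Fin 2) (ZMod (Mv * p))) := by
      rw [aux_scalar_iff]
      simp only [Matrix.map_apply]
      refine ⟨?_, ?_, ?_⟩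
      · rw [castF hMp 0 1]
        have : (lam * (if (0 : Fin 2) = 1 then 1 else 0) + Mv * (A 0 1).val)
            = Mv * (A 0 1).val := by norm_num
        rw [this]
        exact (ZMod.natCast_eq_zero_iff _ _).mpr (mul_dvd_mul_left Mv h01)
      · rw [castF hMp 1 0]
        have : (lam * (if (1 : Fin 2) = 0 then 1 else 0) + Mv * (A 1 0).val)
            = Mv * (A 1 0).val := by norm_num
        rw [this]
        exact (ZMod.natCast_eq_zero_iff _ _).mpr (mul_dvd_mul_left Mv h10)
      · rw [castF hMp 0 0, castF hMp 1 1]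
        apply (ZMod.natCast_eq_natCast_iff _ _ _).mpr
        simp only [if_pos rfl]
        exact Nat.ModEq.add_left _ (Nat.ModEq.mul_left' Mv (h00.trans h11.symm))
    have hdvd2 : Mv * p ∣ Mv := (aux_scalar_iff_dvd F hMp).mp hsc
    have hp1 : p ∣ 1 := (Nat.mul_dvd_mul_iff_left hMpos).mp (by simpa using hdvd2)
    exact hp.ne_one (Nat.dvd_one.mp hp1)
  refine ⟨⟨⟨Mv, lam, A, hMdvd, hlam, heq, hmax, hns⟩⟩, ?_⟩
  constructor
  intro D₁ D₂
  obtain ⟨M₁, la₁, A₁, hd₁, hl₁, he₁, hm₁, hn₁⟩ := D₁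
  obtain ⟨M₂, la₂, A₂, hd₂, hl₂, he₂, hm₂, hn₂⟩ := D₂
  have e₁ : M₁ = Mv := aux_M_eq ⟨M₁, la₁, A₁, hd₁, hl₁, he₁, hm₁, hn₁⟩
  have e₂ : M₂ = Mv := aux_M_eq ⟨M₂, la₂, A₂, hd₂, hl₂, he₂, hm₂, hn₂⟩
  have f₁ : la₁ = (F 0 0).val % M₁ := aux_lam_eq ⟨M₁, la₁, A₁, hd₁, hl₁, he₁, hm₁, hn₁⟩
  have f₂ : la₂ = (F 0 0).val % M₂ := aux_lam_eq ⟨M₂, la₂, A₂, hd₂, hl₂, he₂, hm₂, hn₂⟩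
  have eM : M₂ = M₁ := e₂.trans e₁.symm
  subst eM
  have ela : la₂ = la₁ := by rw [f₁, f₂]
  subst ela
  haveI : NeZero (N / M₂) := by rw [e₂]; infer_instance
  have hM₂pos : 0 < M₂ := lt_of_le_of_lt (Nat.zero_le _) hl₂
  have hAe : A₂ = A₁ := by
    have h := he₂.symm.trans he₁
    have h' := add_left_cancel h
    ext i j
    have h'' := congrFun (congrFun h' i) j
    simp only [Matrix.smul_apply, Matrix.map_apply, smul_eq_mul] at h''
    have hc : ((M₂ * (A₂ i j).val : ℕ) : ZMod N) = ((M₂ * (A₁ i j).val : ℕ) : ZMod N) := by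
      push_cast
      exact h''
    have hmeq : M₂ * (A₂ i j).val % N = M₂ * (A₁ i j).val % N :=
      (ZMod.natCast_eq_natCast_iff _ _ _).mp hc
    have hlt : ∀ B : Matrix (Fin 2) (Fin 2) (ZMod (N / M₂)), M₂ * (B i j).val < N := by
      intro B
      calc M₂ * (B i j).val < M₂ * (N / M₂) :=
            mul_lt_mul_of_pos_left (ZMod.val_lt _) hM₂pos
        _ = N := Nat.mul_div_cancel' hd₂
    rw [Nat.mod_eq_of_lt (hlt A₂), Nat.mod_eq_of_lt (hlt A₁)] at hmeq
    exact ZMod.val_injective _ (Nat.eq_of_mul_eq_mul_left hM₂pos hmeq)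
  subst hAe
  rfl
end

section
/- For integers N ≥ 1, q, η with gcd(η, N) = 1, δ ∈ {0,1}, and L a fixed integer with L ≡ 1 mod 2^{v₂(N)} and L ≡ 0 mod p^{v_p(N)} for all odd primes p | N, the set D(q,η,δ) of invertible matrices mod N of the form (x, ηy; qη*y, x + δLy) (where η·η* ≡ 1 mod N) is an abelian subgroup of GL₂(ℤ/Nℤ). -/
/-!
The matrices in question are exactly `x • 1 + y • A` with `A = !![0, η; q η*, δ L]`. By
Cayley–Hamilton, `A * A = tr A • A - det A • 1`, so the span of `1` and `A` is a commutative
subalgebra of the 2 × 2 matrices; it also contains the adjugate, hence the inverse, of each of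
its invertible elements. Its invertible elements therefore form an abelian subgroup of `GL₂`.
-/

open Matrix

namespace Matrix

variable {R : Type*} [CommRing R] (A : Matrix (Fin 2) (Fin 2) R)

theorem mul_self_eq_trace_smul_sub_det_smul_one_fin_two : A * A = A.trace • A - A.det • 1 := by
  ext i j
  fin_cases i <;> fin_cases j <;>
    simp [mul_apply, Fin.sum_univ_two, trace_fin_two, det_fin_two] <;> ring

theorem smul_one_add_smul_mul_smul_one_add_smul (x y x' y' : R) :
    (x • 1 + y • A) * (x' • 1 + y' • A) =
      (x * x' - y * y' * A.det) • 1 + (x * y' + x' * y + y * y' * A.trace) • A := by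
  have hA := mul_self_eq_trace_smul_sub_det_smul_one_fin_two A
  simp only [add_mul, mul_add, smul_mul_smul, one_mul, mul_one, hA, smul_sub, smul_smul]
  module

theorem adjugate_smul_one_add_smul (x y : R) :
    adjugate (x • 1 + y • A) = (x + y * A.trace) • 1 + (-y) • A := by
  ext i j
  fin_cases i <;> fin_cases j <;> simp [adjugate_fin_two, trace_fin_two] <;> ring

namespace GeneralLinearGroup

def spanOneSelf : Subgroup (GL (Fin 2) R) where
  carrier := {g | ∃ x y : R, (g : Matrix (Fin 2) (Fin 2) R) = x • 1 + y • A}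
  mul_mem' := by
    rintro a b ⟨x, y, ha⟩ ⟨x', y', hb⟩
    exact ⟨_, _, by rw [Units.val_mul, ha, hb, smul_one_add_smul_mul_smul_one_add_smul]⟩
  one_mem' := ⟨1, 0, by simp⟩
  inv_mem' := by
    rintro a ⟨x, y, ha⟩
    refine ⟨Ring.inverse (a : Matrix (Fin 2) (Fin 2) R).det * (x + y * A.trace),
      Ring.inverse (a : Matrix (Fin 2) (Fin 2) R).det * -y, ?_⟩
    rw [coe_units_inv, inv_def, ha, adjugate_smul_one_add_smul, smul_add, smul_smul, smul_smul]

theorem mem_spanOneSelf {A} {g : GL (Fin 2) R} :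
    g ∈ spanOneSelf A ↔ ∃ x y : R, (g : Matrix (Fin 2) (Fin 2) R) = x • 1 + y • A :=
  Iff.rfl

theorem spanOneSelf_mul_comm : ∀ a ∈ spanOneSelf A, ∀ b ∈ spanOneSelf A, a * b = b * a := by
  rintro a ⟨x, y, ha⟩ b ⟨x', y', hb⟩
  ext : 1
  rw [Units.val_mul, Units.val_mul, ha, hb, smul_one_add_smul_mul_smul_one_add_smul,
    smul_one_add_smul_mul_smul_one_add_smul]
  congr 2 <;> ring

end GeneralLinearGroup

end Matrix

theorem stmt_13_general (N : ℕ) (q η ηs L : ℤ) (δ : ℕ) :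
    ∃ H : Subgroup (GL (Fin 2) (ZMod N)),
      (∀ g : GL (Fin 2) (ZMod N), g ∈ H ↔
        ∃ x y : ZMod N, (g : Matrix (Fin 2) (Fin 2) (ZMod N)) =
          !![x, (η : ZMod N) * y;
             (q : ZMod N) * (ηs : ZMod N) * y, x + (δ : ZMod N) * (L : ZMod N) * y]) ∧
      ∀ a ∈ H, ∀ b ∈ H, a * b = b * a := by
  set A : Matrix (Fin 2) (Fin 2) (ZMod N) :=
    !![0, (η : ZMod N); (q : ZMod N) * ηs, (δ : ZMod N) * L]
  have hA : ∀ x y : ZMod N, x • 1 + y • A =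
      !![x, (η : ZMod N) * y; (q : ZMod N) * ηs * y, x + (δ : ZMod N) * L * y] := by
    intro x y
    ext i j
    fin_cases i <;> fin_cases j <;> simp [A] <;> ring
  refine ⟨GeneralLinearGroup.spanOneSelf A, fun g => ?_,
    GeneralLinearGroup.spanOneSelf_mul_comm A⟩
  simp only [GeneralLinearGroup.mem_spanOneSelf, hA]

theorem stmt_13 (N : ℕ) (hN : 1 ≤ N) (q η ηs L : ℤ) (δ : ℕ)
    (hη : Int.gcd η N = 1) (hηs : η * ηs ≡ 1 [ZMOD (N : ℤ)]) (hδ : δ = 0 ∨ δ = 1)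
    (hL2 : L ≡ 1 [ZMOD ((2 : ℤ) ^ (N.factorization 2))])
    (hLodd : ∀ p : ℕ, p.Prime → p ≠ 2 → p ∣ N → ((p : ℤ) ^ (N.factorization p)) ∣ L) :
    ∃ H : Subgroup (GL (Fin 2) (ZMod N)),
      (∀ g : GL (Fin 2) (ZMod N), g ∈ H ↔
        ∃ x y : ZMod N, (g : Matrix (Fin 2) (Fin 2) (ZMod N)) =
          !![x, (η : ZMod N) * y;
             (q : ZMod N) * (ηs : ZMod N) * y, x + (δ : ZMod N) * (L : ZMod N) * y]) ∧
      ∀ a ∈ H, ∀ b ∈ H, a * b = b * a :=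
  stmt_13_general N q η ηs L δ
end

section
/- For every matrix F ∈ GL₂(ℤ/Nℤ) there exist an integer q, an integer η coprime to N, δ ∈ {0,1}, and γ ∈ SL₂(ℤ/Nℤ) such that γFγ⁻¹ ∈ D(q,η,δ). In other words, the groups D(q,η,δ) meet every SL₂(ℤ/Nℤ)-conjugation orbit in GL₂(ℤ/Nℤ). -/
/-!
`SL₂`-conjugacy is compatible with ring homomorphisms and finite products, so by the Chinese
remainder theorem it suffices to work over `ℤ/pᵏ`. This ring is a quotient of the valuation ring
`ℤ_[p]`, so divisibility in it is total, and conjugating by `!![0, -1; 1, 0]` or `!![1, 1; 0, 1]`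
brings `M = !![a, b; c, d]` to a form in which `b` divides `c` and `d - a = b m`. Conjugating by
`!![1, 0; s, 1]` replaces `m` by `m + 2 s`; this makes the diagonal constant (`δ = 0`) when `2` is
a unit or `m` is even, and otherwise `p = 2`, `m` is a unit and `η = m⁻¹` gives `δ = 1`. The
`2`-primary part and the odd part are glued with the idempotent `L` of `ℤ/N` that is `1` modulo
the `2`-part and `0` modulo the odd part.
-/

open Matrix

section SLConj

variable {R S S₁ S₂ : Type*} [CommRing R] [CommRing S] [CommRing S₁] [CommRing S₂]

def SLConj (M T : Matrix (Fin 2) (Fin 2) R) : Prop :=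
  ∃ γ : SpecialLinearGroup (Fin 2) R, (γ : Matrix (Fin 2) (Fin 2) R) * M = T * γ

theorem SLConj.refl (M : Matrix (Fin 2) (Fin 2) R) : SLConj M M :=
  ⟨1, by simp⟩

theorem SLConj.trans {M T U : Matrix (Fin 2) (Fin 2) R} (h₁ : SLConj M T) (h₂ : SLConj T U) :
    SLConj M U := by
  obtain ⟨γ, hγ⟩ := h₁
  obtain ⟨δ, hδ⟩ := h₂
  refine ⟨δ * γ, ?_⟩
  rw [Matrix.SpecialLinearGroup.coe_mul, mul_assoc, hγ, ← mul_assoc, hδ, mul_assoc]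

theorem slConj_swap (a b c d : R) : SLConj !![a, b; c, d] !![d, -c; -b, a] :=
  ⟨⟨!![0, -1; 1, 0], by simp [det_fin_two_of]⟩, by ext i j; fin_cases i <;> fin_cases j <;> simp⟩

theorem slConj_upper (a b c d : R) :
    SLConj !![a, b; c, d] !![a + c, b + (d - a) - c; c, d - c] :=
  ⟨⟨!![1, 1; 0, 1], by simp [det_fin_two_of]⟩, by
    ext i j; fin_cases i <;> fin_cases j <;> simp [mul_apply, Fin.sum_univ_succ]; ring⟩

theorem slConj_lower (s a b c d : R) :
    SLConj !![a, b; c, d] !![a - s * b, b; c + s * (a - d) - s * s * b, d + s * b] :=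
  ⟨⟨!![1, 0; s, 1], by simp [det_fin_two_of]⟩, by
    ext i j; fin_cases i <;> fin_cases j <;> simp [mul_apply, Fin.sum_univ_succ] <;> ring⟩

/-- Over `ZMod N` with `e = δ * L`, the matrices `!![x, η * y; q * y, x + e * y]` make up the
paper's group `D(q η, η, δ)`. -/
def SLConjD (e : R) (M : Matrix (Fin 2) (Fin 2) R) : Prop :=
  ∃ (η : Rˣ) (x y q : R), SLConj M !![x, η * y; q * y, x + e * y]

theorem SLConjD.of_slConj {e : R} {M T : Matrix (Fin 2) (Fin 2) R} (hMT : SLConj M T)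
    (hT : SLConjD e T) : SLConjD e M := by
  obtain ⟨η, x, y, q, h⟩ := hT
  exact ⟨η, x, y, q, hMT.trans h⟩

theorem slConjD_zero_of_dvd {a b c d m : R} (hc : b ∣ c) (hm : d - a = b * (2 * m)) :
    SLConjD 0 !![a, b; c, d] := by
  obtain ⟨c₁, rfl⟩ := hc
  refine .of_slConj (slConj_lower (-m) a b (b * c₁) d) ⟨1, a + m * b, b, c₁ + m ^ 2, ?_⟩
  convert SLConj.refl _ using 2
  ext i j; fin_cases i <;> fin_cases j <;> simp
  · linear_combination (-m) * hm
  · linear_combination -hm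

theorem slConjD_one_of_dvd {a b c d m : R} (hc : b ∣ c) (hm : d - a = b * m) (hmu : IsUnit m) :
    SLConjD 1 !![a, b; c, d] := by
  obtain ⟨c₁, rfl⟩ := hc
  refine ⟨hmu.unit⁻¹, a, b * m, c₁ * ↑hmu.unit⁻¹, ?_⟩
  convert SLConj.refl _ using 2
  ext i j; fin_cases i <;> fin_cases j <;> simp
  · linear_combination b * hmu.val_inv_mul
  · linear_combination b * c₁ * hmu.val_inv_mul
  · linear_combination -hm

theorem SLConj.map (f : R →+* S) {M T : Matrix (Fin 2) (Fin 2) R} (h : SLConj M T) :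
    SLConj (f.mapMatrix M) (f.mapMatrix T) := by
  obtain ⟨γ, hγ⟩ := h
  exact ⟨SpecialLinearGroup.map f γ, by simpa [map_mul] using congrArg f.mapMatrix hγ⟩

theorem SLConj.prod {M T : Matrix (Fin 2) (Fin 2) (S₁ × S₂)}
    (h₁ : SLConj ((RingHom.fst S₁ S₂).mapMatrix M) ((RingHom.fst S₁ S₂).mapMatrix T))
    (h₂ : SLConj ((RingHom.snd S₁ S₂).mapMatrix M) ((RingHom.snd S₁ S₂).mapMatrix T)) :
    SLConj M T := by
  obtain ⟨γ₁, hγ₁⟩ := h₁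
  obtain ⟨γ₂, hγ₂⟩ := h₂
  let P : Matrix (Fin 2) (Fin 2) (S₁ × S₂) := of fun i j => (γ₁ i j, γ₂ i j)
  have hP : P.det = 1 := Prod.ext
    (((RingHom.fst S₁ S₂).map_det P).trans γ₁.prop)
    (((RingHom.snd S₁ S₂).map_det P).trans γ₂.prop)
  have c₁ : (RingHom.fst S₁ S₂).mapMatrix (P * M) = (RingHom.fst S₁ S₂).mapMatrix (T * P) := by
    rw [map_mul, map_mul]; exact hγ₁
  have c₂ : (RingHom.snd S₁ S₂).mapMatrix (P * M) = (RingHom.snd S₁ S₂).mapMatrix (T * P) := by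
    rw [map_mul, map_mul]; exact hγ₂
  exact ⟨⟨P, hP⟩, ext fun i j => Prod.ext (congrFun₂ c₁ i j) (congrFun₂ c₂ i j)⟩

theorem SLConjD.map (f : R →+* S) {e : R} {M : Matrix (Fin 2) (Fin 2) R} (h : SLConjD e M) :
    SLConjD (f e) (f.mapMatrix M) := by
  obtain ⟨η, x, y, q, h⟩ := h
  refine ⟨Units.map f η, f x, f y, f q, ?_⟩
  convert h.map f using 1
  ext i j; fin_cases i <;> fin_cases j <;> simp

theorem SLConjD.prod {e₁ : S₁} {e₂ : S₂} {M : Matrix (Fin 2) (Fin 2) (S₁ × S₂)}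
    (h₁ : SLConjD e₁ ((RingHom.fst S₁ S₂).mapMatrix M))
    (h₂ : SLConjD e₂ ((RingHom.snd S₁ S₂).mapMatrix M)) : SLConjD (e₁, e₂) M := by
  obtain ⟨η₁, x₁, y₁, q₁, h₁⟩ := h₁
  obtain ⟨η₂, x₂, y₂, q₂, h₂⟩ := h₂
  refine ⟨MulEquiv.prodUnits.symm (η₁, η₂), (x₁, x₂), (y₁, y₂), (q₁, q₂), SLConj.prod ?_ ?_⟩
  · convert h₁ using 2
    ext i j; fin_cases i <;> fin_cases j <;> simp [MulEquiv.prodUnits]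
  · convert h₂ using 2
    ext i j; fin_cases i <;> fin_cases j <;> simp [MulEquiv.prodUnits]

theorem SLConjD.of_ringEquiv_prod (f : R ≃+* S₁ × S₂) {e₁ : S₁} {e₂ : S₂}
    {M : Matrix (Fin 2) (Fin 2) R}
    (h₁ : SLConjD e₁ (((RingHom.fst S₁ S₂).comp f.toRingHom).mapMatrix M))
    (h₂ : SLConjD e₂ (((RingHom.snd S₁ S₂).comp f.toRingHom).mapMatrix M)) :
    SLConjD (f.symm (e₁, e₂)) M := by
  have h := (SLConjD.prod (M := f.toRingHom.mapMatrix M) h₁ h₂).map f.symm.toRingHom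
  have hM : f.symm.toRingHom.mapMatrix (f.toRingHom.mapMatrix M) = M := by ext i j; simp
  rwa [hM] at h

end SLConj

section PreValuationRing

variable {R : Type*} [CommRing R] [PreValuationRing R]

theorem dvd_total_three (a b c : R) :
    (a ∣ b ∧ a ∣ c) ∨ (b ∣ a ∧ b ∣ c) ∨ (c ∣ a ∧ c ∣ b) := by
  rcases ValuationRing.dvd_total a b with hab | hba
  · rcases ValuationRing.dvd_total a c with hac | hca
    · exact .inl ⟨hab, hac⟩
    · exact .inr (.inr ⟨hca, hca.trans hab⟩)
  · rcases ValuationRing.dvd_total b c with hbc | hcb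
    · exact .inr (.inl ⟨hba, hbc⟩)
    · exact .inr (.inr ⟨hcb.trans hba, hcb⟩)

theorem not_isUnit_sub {a b : R} (ha : ¬IsUnit a) (hb : ¬IsUnit b) : ¬IsUnit (a - b) := by
  rcases ValuationRing.dvd_total a b with ⟨c, rfl⟩ | ⟨c, rfl⟩
  · rw [← mul_one_sub]
    exact fun h => ha (isUnit_of_mul_isUnit_left h)
  · rw [← mul_sub_one]
    exact fun h => hb (isUnit_of_mul_isUnit_left h)

theorem isUnit_one_add_sub {a b : R} (ha : ¬IsUnit a) (hb : ¬IsUnit b) : IsUnit (1 + a - b) := by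
  by_contra h
  exact not_isUnit_sub h (not_isUnit_sub ha hb) (by simp)

theorem exists_slConj_dvd (M : Matrix (Fin 2) (Fin 2) R) :
    ∃ a b c d : R, SLConj M !![a, b; c, d] ∧ b ∣ c ∧ b ∣ d - a := by
  obtain ⟨a, b, c, d, rfl⟩ : ∃ a b c d : R, M = !![a, b; c, d] := ⟨_, _, _, _, eta_fin_two M⟩
  have of_swap (hb : c ∣ b) (ht : c ∣ d - a) :
      ∃ a' b' c' d' : R, SLConj !![a, b; c, d] !![a', b'; c', d'] ∧ b' ∣ c' ∧ b' ∣ d' - a' :=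
    ⟨d, -c, -b, a, slConj_swap a b c d, neg_dvd.2 (dvd_neg.2 hb),
      by rw [← neg_sub]; exact neg_dvd.2 (dvd_neg.2 ht)⟩
  rcases dvd_total_three b c (d - a) with ⟨hc, ht⟩ | ⟨hb, ht⟩ | ⟨⟨β, hβ⟩, ⟨χ, hχ⟩⟩
  · exact ⟨a, b, c, d, .refl _, hc, ht⟩
  · exact of_swap hb ht
  by_cases hβu : IsUnit β
  · have ht : b ∣ d - a := hβ ▸ hβu.mul_right_dvd.2 dvd_rfl
    exact ⟨a, b, c, d, .refl _, ht.trans ⟨χ, hχ⟩, ht⟩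
  by_cases hχu : IsUnit χ
  · have ht : c ∣ d - a := hχ ▸ hχu.mul_right_dvd.2 dvd_rfl
    exact of_swap (ht.trans ⟨β, hβ⟩) ht
  have hu := isUnit_one_add_sub hβu hχu
  have hb' : b + (d - a) - c = (d - a) * (1 + β - χ) := by rw [hβ, hχ]; ring
  have ht' : d - c - (a + c) = (d - a) * (1 - 2 * χ) := by rw [hχ]; ring
  refine ⟨a + c, b + (d - a) - c, c, d - c, slConj_upper a b c d, ?_, ?_⟩
  · rw [hb', hu.mul_right_dvd, hχ]; exact dvd_mul_right _ _
  · rw [hb', hu.mul_right_dvd, ht']; exact dvd_mul_right _ _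

theorem slConjD_zero_of_isUnit_two (h2 : IsUnit (2 : R)) (M : Matrix (Fin 2) (Fin 2) R) :
    SLConjD 0 M := by
  obtain ⟨a, b, c, d, hM, hc, m, hm⟩ := exists_slConj_dvd M
  refine .of_slConj hM (slConjD_zero_of_dvd hc (m := ↑h2.unit⁻¹ * m) ?_)
  rw [hm, ← mul_assoc 2, h2.mul_val_inv, one_mul]

theorem slConjD_zero_or_one (h2 : ∀ m : R, ¬IsUnit m → 2 ∣ m) (M : Matrix (Fin 2) (Fin 2) R) :
    SLConjD 0 M ∨ SLConjD 1 M := by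
  obtain ⟨a, b, c, d, hM, hc, m, hm⟩ := exists_slConj_dvd M
  by_cases hmu : IsUnit m
  · exact .inr (.of_slConj hM (slConjD_one_of_dvd hc hm hmu))
  · obtain ⟨m', rfl⟩ := h2 m hmu
    exact .inl (.of_slConj hM (slConjD_zero_of_dvd hc hm))

end PreValuationRing

theorem Nat.ordProj_dvd_ordCompl_of_ne {n p q : ℕ} (h : p ≠ q) :
    p ^ n.factorization p ∣ n / q ^ n.factorization q := by
  have := Nat.ordProj_dvd (n / q ^ n.factorization q) p
  rwa [Nat.factorization_ordCompl, Finsupp.erase_ne h] at this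

namespace ZMod

variable {p : ℕ} [Fact p.Prime]

instance (k : ℕ) : PreValuationRing (ZMod (p ^ k)) :=
  (ZMod.ringHom_surjective (PadicInt.toZModPow k)).preValuationRing
    (PadicInt.toZModPow (p := p) k : ℤ_[p] →ₙ* ZMod (p ^ k))

theorem prime_dvd_of_not_isUnit {k : ℕ} {x : ZMod (p ^ k)} (hx : ¬IsUnit x) :
    (p : ZMod (p ^ k)) ∣ x := by
  obtain ⟨z, rfl⟩ := ZMod.ringHom_surjective (PadicInt.toZModPow k) x
  have hz : (p : ℤ_[p]) ∣ z :=
    (PadicInt.norm_lt_one_iff_dvd z).1 (PadicInt.mem_nonunits.1 fun h => hx (h.map _))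
  simpa using map_dvd (PadicInt.toZModPow k) hz

theorem isUnit_two_of_ne_two (hp : p ≠ 2) (k : ℕ) : IsUnit (2 : ZMod (p ^ k)) := by
  have := (ZMod.isUnit_iff_coprime 2 (p ^ k)).2
    (((Nat.coprime_primes Nat.prime_two Fact.out).2 hp.symm).pow_right k)
  simpa using this

theorem slConjD_zero_or_one_two_pow (k : ℕ) (M : Matrix (Fin 2) (Fin 2) (ZMod (2 ^ k))) :
    SLConjD 0 M ∨ SLConjD 1 M :=
  slConjD_zero_or_one (fun _ hm => by simpa using prime_dvd_of_not_isUnit hm) M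

theorem slConjD_zero_of_odd {n : ℕ} (hn : Odd n) (M : Matrix (Fin 2) (Fin 2) (ZMod n)) :
    SLConjD 0 M := by
  induction n using Nat.recOnPosPrimePosCoprime with
  | prime_pow p k hp hk =>
    have : Fact p.Prime := ⟨hp⟩
    have hp2 : p ≠ 2 := by
      rintro rfl
      exact Nat.not_odd_iff_even.2 ((Nat.even_pow' hk.ne').2 even_two) hn
    exact slConjD_zero_of_isUnit_two (isUnit_two_of_ne_two hp2 k) M
  | zero => exact absurd hn (by decide)
  | one => exact ⟨1, 0, 0, 0, 1, Subsingleton.elim _ _⟩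
  | coprime a b _ _ hab iha ihb =>
    have h := SLConjD.of_ringEquiv_prod (M := M) (ZMod.chineseRemainder hab)
      (iha (Nat.odd_mul.1 hn).1 _) (ihb (Nat.odd_mul.1 hn).2 _)
    rwa [Prod.mk_zero_zero, map_zero] at h

theorem exists_slConjD_two_part {N : ℕ} (hN : N ≠ 0) (M : Matrix (Fin 2) (Fin 2) (ZMod N)) :
    ∃ (δ : ℕ) (L : ℤ), (δ = 0 ∨ δ = 1) ∧ L ≡ 1 [ZMOD 2 ^ N.factorization 2] ∧
      ((N / 2 ^ N.factorization 2 : ℕ) : ℤ) ∣ L ∧ SLConjD ((δ : ZMod N) * L) M := by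
  have : NeZero N := ⟨hN⟩
  set v := N.factorization 2
  set m := N / 2 ^ v
  have hm : Nat.Coprime 2 m := Nat.coprime_ordCompl Nat.prime_two hN
  let f : ZMod N ≃+* ZMod (2 ^ v) × ZMod m :=
    (ZMod.ringEquivCongr (Nat.ordProj_mul_ordCompl_eq_self N 2).symm).trans
      (ZMod.chineseRemainder (hm.pow_left v))
  obtain ⟨δ, hδ, h₂⟩ : ∃ δ : ℕ, (δ = 0 ∨ δ = 1) ∧
      SLConjD (δ : ZMod (2 ^ v)) (((RingHom.fst _ _).comp f.toRingHom).mapMatrix M) := by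
    rcases slConjD_zero_or_one_two_pow v (((RingHom.fst _ _).comp f.toRingHom).mapMatrix M)
      with h | h
    exacts [⟨0, .inl rfl, by simpa using h⟩, ⟨1, .inr rfl, by simpa using h⟩]
  have hodd := slConjD_zero_of_odd (Nat.coprime_two_left.1 hm)
    (((RingHom.snd _ _).comp f.toRingHom).mapMatrix M)
  set L : ℤ := ((f.symm (1, 0)).val : ℤ)
  have hL {S : Type} [CommRing S] (g : ZMod N →+* S) : (L : S) = g (f.symm (1, 0)) := by
    rw [← ZMod.natCast_zmod_val (f.symm (1, 0)), map_natCast, Int.cast_natCast]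
  refine ⟨δ, L, hδ, ?_, ?_, ?_⟩
  · have h := (ZMod.intCast_eq_intCast_iff L 1 (2 ^ v)).1
      (by simpa using hL ((RingHom.fst _ _).comp f.toRingHom))
    exact_mod_cast h
  · exact (ZMod.intCast_zmod_eq_zero_iff_dvd L m).1
      (by simpa using hL ((RingHom.snd _ _).comp f.toRingHom))
  · convert SLConjD.of_ringEquiv_prod f h₂ hodd using 1
    rw [hL (RingHom.id _), RingHom.id_apply, ← map_natCast f.symm δ, ← map_mul]
    congr 1
    ext <;> simp

end ZMod

theorem stmt_15 (N : ℕ) (hN : 1 ≤ N) (F : GL (Fin 2) (ZMod N)) :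
    ∃ (q η ηs L : ℤ) (δ : ℕ),
      Int.gcd η N = 1 ∧ η * ηs ≡ 1 [ZMOD (N : ℤ)] ∧ (δ = 0 ∨ δ = 1) ∧
      L ≡ 1 [ZMOD ((2 : ℤ) ^ (N.factorization 2))] ∧
      (∀ p : ℕ, p.Prime → p ≠ 2 → p ∣ N → ((p : ℤ) ^ (N.factorization p)) ∣ L) ∧
      ∃ (γ : Matrix.SpecialLinearGroup (Fin 2) (ZMod N)) (x y : ZMod N),
        (γ : Matrix (Fin 2) (Fin 2) (ZMod N)) * (F : Matrix (Fin 2) (Fin 2) (ZMod N)) *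
            ((γ⁻¹ : Matrix.SpecialLinearGroup (Fin 2) (ZMod N)) :
              Matrix (Fin 2) (Fin 2) (ZMod N)) =
          !![x, (η : ZMod N) * y;
             (q : ZMod N) * (ηs : ZMod N) * y, x + (δ : ZMod N) * (L : ZMod N) * y] := by
  have : NeZero N := ⟨by omega⟩
  obtain ⟨δ, L, hδ, hL₂, hL, η, x, y, q, γ, hγ⟩ :=
    ZMod.exists_slConjD_two_part (by omega) (F : Matrix (Fin 2) (Fin 2) (ZMod N))
  refine ⟨((q * η).val : ℤ), ((η : ZMod N).val : ℤ), ((η⁻¹ : (ZMod N)ˣ) : ZMod N).val, L, δ,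
    ?_, ?_, hδ, hL₂, ?_, γ, x, y, ?_⟩
  · rw [Int.gcd_natCast_natCast]
    exact ZMod.val_coe_unit_coprime η
  · rw [← ZMod.intCast_eq_intCast_iff]
    simp
  · intro p _ hp2 _
    exact (Int.natCast_dvd_natCast.2 (Nat.ordProj_dvd_ordCompl_of_ne hp2)).trans
      (by exact_mod_cast hL)
  · rw [hγ, mul_assoc, ← Matrix.SpecialLinearGroup.coe_mul, mul_inv_cancel,
      Matrix.SpecialLinearGroup.coe_one, mul_one]
    simp
end

section
/- For any integers t, n with t² - 4n > 0 a perfect square, the number of SL₂(ℤ)-conjugation orbits in the set T(t,n) of 2×2 integer matrices of trace t and determinant n equals √(t² - 4n). Equivalently, the sum over all SL₂(ℤ/Nℤ)-conjugation orbits C of GL₂(ℤ/Nℤ) of U_C(√(t²-4n)) equals √(t²-4n). -/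
/-!
Since `t² - 4n = s²` with `s > 0`, the characteristic polynomial `X² - tX + n` has integer roots
`λ > μ` with `λ - μ = s`. A primitive integer eigenvector for `λ` completes to a matrix in
`SL₂(ℤ)`, so every matrix of trace `t` and determinant `n` is conjugate to some `!![λ, j; 0, μ]`.
Conjugating by `!![1, -k; 0, 1]` shifts `j` by `k (λ - μ)`; conversely a conjugation between two
such matrices has lower-left entry `c` with `c (λ - μ) = 0`, so it is `±!![1, b; 0, 1]` and again
shifts `j` by a multiple of `λ - μ`. Hence the orbits are indexed by `ℤ / sℤ`.
-/

open Matrix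

namespace Matrix

section IsSLConj

variable {m R : Type*} [Fintype m] [DecidableEq m] [CommRing R]

def IsSLConj (A B : Matrix m m R) : Prop :=
  ∃ g : SpecialLinearGroup m R,
    (g : Matrix m m R) * A * ((g⁻¹ : SpecialLinearGroup m R) : Matrix m m R) = B

theorem SpecialLinearGroup.coe_mul_coe_inv (g : SpecialLinearGroup m R) :
    (g : Matrix m m R) * ((g⁻¹ : SpecialLinearGroup m R) : Matrix m m R) = 1 := by
  rw [← SpecialLinearGroup.coe_mul, mul_inv_cancel, SpecialLinearGroup.coe_one]

theorem SpecialLinearGroup.coe_inv_mul_coe (g : SpecialLinearGroup m R) :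
    ((g⁻¹ : SpecialLinearGroup m R) : Matrix m m R) * (g : Matrix m m R) = 1 := by
  rw [← SpecialLinearGroup.coe_mul, inv_mul_cancel, SpecialLinearGroup.coe_one]

theorem SpecialLinearGroup.conj_eq_iff_mul_eq (g : SpecialLinearGroup m R) {A B : Matrix m m R} :
    (g : Matrix m m R) * A * ((g⁻¹ : SpecialLinearGroup m R) : Matrix m m R) = B ↔
      (g : Matrix m m R) * A = B * g := by
  constructor
  · rintro rfl
    rw [Matrix.mul_assoc _ _ (g : Matrix m m R), coe_inv_mul_coe, Matrix.mul_one]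
  · intro h
    rw [h, Matrix.mul_assoc, coe_mul_coe_inv, Matrix.mul_one]

theorem isSLConj_equivalence : Equivalence (IsSLConj (m := m) (R := R)) where
  refl A := ⟨1, by simp⟩
  symm := by
    rintro A B ⟨g, rfl⟩
    refine ⟨g⁻¹, ?_⟩
    simp only [inv_inv, ← Matrix.mul_assoc, SpecialLinearGroup.coe_inv_mul_coe, Matrix.one_mul]
    rw [Matrix.mul_assoc, SpecialLinearGroup.coe_inv_mul_coe, Matrix.mul_one]
  trans := by
    rintro A B C ⟨g, rfl⟩ ⟨h, rfl⟩
    exact ⟨h * g, by simp only [_root_.mul_inv_rev, SpecialLinearGroup.coe_mul, Matrix.mul_assoc]⟩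

def slConjSetoid (P : Matrix m m R → Prop) : Setoid {M // P M} :=
  ⟨fun A B => IsSLConj A.1 B.1, isSLConj_equivalence.comap _⟩

end IsSLConj

theorem isSLConj_upperTriangular_add (lam mu j k : ℤ) :
    IsSLConj !![lam, j; 0, mu] !![lam, j + k * (lam - mu); 0, mu] := by
  refine ⟨⟨!![1, -k; 0, 1], by simp⟩, (SpecialLinearGroup.conj_eq_iff_mul_eq _).2 ?_⟩
  simp only [mul_fin_two]
  ring_nf

theorem dvd_sub_of_isSLConj_upperTriangular {lam mu j j' : ℤ} (hne : lam ≠ mu)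
    (h : IsSLConj !![lam, j; 0, mu] !![lam, j'; 0, mu]) : lam - mu ∣ j - j' := by
  obtain ⟨g, hg⟩ := h
  rw [SpecialLinearGroup.conj_eq_iff_mul_eq] at hg
  obtain ⟨a, b, c, d, hγ⟩ : ∃ a b c d, (g : Matrix (Fin 2) (Fin 2) ℤ) = !![a, b; c, d] :=
    ⟨_, _, _, _, eta_fin_two _⟩
  have hdet : a * d - b * c = 1 := by rw [← det_fin_two_of, ← hγ, g.2]
  rw [hγ] at hg
  have h10 := congrFun (congrFun hg 1) 0
  have h01 := congrFun (congrFun hg 0) 1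
  simp only [mul_fin_two, of_apply, cons_val', cons_val_zero, cons_val_one, empty_val',
    cons_val_fin_one, mul_zero, add_zero, zero_mul, zero_add] at h10 h01
  have hc : c = 0 :=
    (mul_eq_zero.1 (by linear_combination h10 : c * (lam - mu) = 0)).resolve_right
      (sub_ne_zero.2 hne)
  subst hc
  rcases Int.eq_one_or_neg_one_of_mul_eq_one' (by linear_combination hdet : a * d = 1) with
    ⟨rfl, rfl⟩ | ⟨rfl, rfl⟩
  · exact ⟨b, by linear_combination h01⟩
  · exact ⟨-b, by linear_combination -h01⟩

theorem isSLConj_upperTriangular_iff {lam mu j j' : ℤ} (hne : lam ≠ mu) :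
    IsSLConj !![lam, j; 0, mu] !![lam, j'; 0, mu] ↔ lam - mu ∣ j' - j := by
  refine ⟨fun h => dvd_sub_comm.1 (dvd_sub_of_isSLConj_upperTriangular hne h), ?_⟩
  rintro ⟨k, hk⟩
  rw [eq_add_of_sub_eq' hk, mul_comm]
  exact isSLConj_upperTriangular_add lam mu j k

theorem exists_coprime_eigenvector {M : Matrix (Fin 2) (Fin 2) ℤ} {lam : ℤ}
    (hchar : lam ^ 2 - M.trace * lam + M.det = 0) :
    ∃ p q : ℤ, IsCoprime p q ∧ M *ᵥ ![p, q] = lam • ![p, q] := by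
  obtain ⟨v, hv0, hv⟩ : ∃ v, v ≠ 0 ∧ (M - lam • (1 : Matrix (Fin 2) (Fin 2) ℤ)) *ᵥ v = 0 := by
    refine exists_mulVec_eq_zero_iff.2 ?_
    rw [eta_fin_two M, trace_fin_two_of, det_fin_two_of] at hchar
    rw [eta_fin_two M, one_fin_two]
    simp only [smul_of, smul_cons, Int.zsmul_eq_mul, mul_one, mul_zero, smul_empty, of_sub_of,
      sub_cons, head_cons, tail_cons, sub_zero, sub_self, zero_empty, det_fin_two_of]
    linear_combination hchar
  rw [sub_mulVec, smul_mulVec, one_mulVec, sub_eq_zero] at hv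
  have hgcd : 0 < (v 0).gcd (v 1) := by
    refine Int.gcd_pos_iff.2 (not_and_or.1 fun h => hv0 ?_)
    ext i; fin_cases i <;> simp [h.1, h.2]
  obtain ⟨g, p, q, hg, hpq, hp, hq⟩ := Int.exists_gcd_one' hgcd
  have hv' : v = (g : ℤ) • ![p, q] := by ext i; fin_cases i <;> simp [hp, hq, mul_comm]
  refine ⟨p, q, Int.isCoprime_iff_gcd_eq_one.2 hpq,
    smul_right_injective _ (Int.natCast_ne_zero.2 hg.ne') ?_⟩
  simp only [← mulVec_smul, smul_comm _ lam, ← hv', hv]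

theorem exists_isSLConj_upperTriangular {M : Matrix (Fin 2) (Fin 2) ℤ} {lam mu : ℤ}
    (htr : M.trace = lam + mu) (hdet : M.det = lam * mu) :
    ∃ j, IsSLConj M !![lam, j; 0, mu] := by
  obtain ⟨p, q, ⟨x, y, hxy⟩, hv⟩ :=
    exists_coprime_eigenvector (lam := lam) (by rw [htr, hdet]; ring)
  obtain ⟨a, b, c, d, rfl⟩ : ∃ a b c d, M = !![a, b; c, d] := ⟨_, _, _, _, eta_fin_two M⟩
  simp only [trace_fin_two_of, det_fin_two_of] at htr hdet
  have he0 : a * p + b * q = lam * p := by simpa [mul_comm] using congrFun hv 0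
  have he1 : c * p + d * q = lam * q := by simpa [mul_comm] using congrFun hv 1
  let γ : SpecialLinearGroup (Fin 2) ℤ :=
    ⟨!![x, y; -q, p], by rw [det_fin_two_of]; linear_combination hxy⟩
  refine ⟨(x * a + y * c) * -y + (x * b + y * d) * x, γ, ?_⟩
  rw [SpecialLinearGroup.coe_inv]
  simp only [γ, adjugate_fin_two_of, mul_fin_two, neg_neg]
  congr
  · linear_combination x * he0 + y * he1 + lam * hxy
  · linear_combination -q * he0 + p * he1
  · linear_combination htr + (a + d - lam) * hxy - x * he0 - y * he1

end Matrix

theorem exists_int_roots_of_sq_eq_discrim {t n s : ℤ} (hsq : s ^ 2 = t ^ 2 - 4 * n) :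
    ∃ lam mu : ℤ, lam - mu = s ∧ lam + mu = t ∧ lam * mu = n := by
  obtain ⟨l, hl⟩ : Even (t + s) := by
    rcases Int.even_mul.1 (⟨2 * n, by linear_combination -hsq⟩ : Even ((t + s) * (t - s))) with
      h | ⟨r, hr⟩
    · exact h
    · exact ⟨r + s, by omega⟩
  refine ⟨l, t - l, by omega, by ring, ?_⟩
  have h4 : 4 * (l * (t - l)) = 4 * n := by linear_combination (2 * l - t + s) * hl - hsq
  omega

theorem Nat.card_eq_of_surjective_of_fibers_zmod {Q : Type*} {s : ℕ} (f : ℤ → Q)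
    (hf : Function.Surjective f) (hfib : ∀ i j, f i = f j ↔ (i : ZMod s) = j) :
    Nat.card Q = s := by
  have hbij : Function.Bijective fun x : ZMod s => f x.cast := by
    refine ⟨fun x y hxy => ?_, fun q => ?_⟩
    · simpa only [ZMod.intCast_zmod_cast] using (hfib _ _).1 hxy
    · obtain ⟨i, rfl⟩ := hf q
      exact ⟨i, (hfib _ _).2 (ZMod.intCast_zmod_cast _)⟩
  rw [← Nat.card_eq_of_bijective _ hbij, Nat.card_zmod]

theorem stmt_16 (t n : ℤ) (s : ℕ) (hs : 0 < s) (hsq : (s : ℤ) ^ 2 = t ^ 2 - 4 * n) :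
    Nat.card (Quot (fun A B : {M : Matrix (Fin 2) (Fin 2) ℤ // M.trace = t ∧ M.det = n} =>
      ∃ g : Matrix.SpecialLinearGroup (Fin 2) ℤ,
        (g : Matrix (Fin 2) (Fin 2) ℤ) * A.1 *
          ((g⁻¹ : Matrix.SpecialLinearGroup (Fin 2) ℤ) : Matrix (Fin 2) (Fin 2) ℤ) = B.1)) =
      s := by
  obtain ⟨lam, mu, hs_eq, htr, hdet⟩ := exists_int_roots_of_sq_eq_discrim hsq
  let T : Matrix (Fin 2) (Fin 2) ℤ → Prop := fun M => M.trace = t ∧ M.det = n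
  change Nat.card (Quotient (slConjSetoid T)) = s
  have hT : ∀ j, T !![lam, j; 0, mu] := fun j =>
    ⟨by rw [trace_fin_two_of, htr], by rw [det_fin_two_of, ← hdet, mul_zero, sub_zero]⟩
  refine Nat.card_eq_of_surjective_of_fibers_zmod (fun j => ⟦⟨!![lam, j; 0, mu], hT j⟩⟧) ?_ ?_
  · rintro ⟨M, hM⟩
    obtain ⟨j, hj⟩ := exists_isSLConj_upperTriangular (hM.1.trans htr.symm) (hM.2.trans hdet.symm)
    exact ⟨j, Quotient.sound (isSLConj_equivalence.symm hj)⟩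
  · intro i j
    rw [Quotient.eq, ZMod.intCast_eq_intCast_iff_dvd_sub, ← hs_eq]
    exact isSLConj_upperTriangular_iff (by omega)
end

section
/- Let N ≥ 1, let D ⊆ GL₂(ℤ/Nℤ) be a subgroup, set Γ_D = {γ ∈ SL₂(ℤ) : γ mod N ∈ D} and T_D(n) = {A ∈ M₂(ℤ) : A mod N ∈ D, det A = n} for n coprime to N with T_D(n) nonempty. Then the map Γ_D·α ↦ SL₂(ℤ)·α gives a bijection between the left coset space Γ_D \ T_D(n) and the left coset space SL₂(ℤ) \ T(n), where T(n) = {A ∈ M₂(ℤ) : det A = n}. -/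
/-!
Forgetting the congruence condition `α mod N ∈ D` is compatible with the two coset relations.
It is injective on cosets: if `γ α = β` with `α, β ∈ T_D(n)` and `γ ∈ SL₂(ℤ)`, then
`γ ≡ β α⁻¹ (mod N)` lies in `D`. It is surjective: fix `α₀ ∈ T_D(n)`; for `β` of determinant `n`
the matrix `α₀ β⁻¹ mod N` has determinant `1`, since `n` is a unit mod `N`, so it lifts to some
`γ ∈ SL₂(ℤ)` and then `γ β ∈ T_D(n)`. Reduction `SL₂(ℤ) → SL₂(ℤ/Nℤ)` is onto because the bottom
row `(c, d)` of a matrix in `SL₂(ℤ/Nℤ)` lifts to a coprime integer pair `(c, d + N r)`, with `r`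
the product of the primes dividing `c` but not `d`, and a coprime bottom row can be completed to
a matrix in `SL₂(ℤ)` congruent to the given one.
-/

open Matrix

/-- An integer matrix reduces mod `N` into the subgroup `D ⊆ GL₂(ℤ/Nℤ)`. -/
def ReducesInto (N : ℕ) (D : Subgroup (GL (Fin 2) (ZMod N)))
    (A : Matrix (Fin 2) (Fin 2) ℤ) : Prop :=
  ∃ g ∈ D, (g : Matrix (Fin 2) (Fin 2) (ZMod N)) = A.map (fun a : ℤ => (a : ZMod N))

theorem Quot.map_bijective {α β : Type*} {r : α → α → Prop} {s : β → β → Prop}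
    (hs : Equivalence s) (f : α → β) (hrs : ∀ a b, r a b ↔ s (f a) (f b))
    (hsurj : ∀ b, ∃ a, s b (f a)) :
    Function.Bijective (Quot.map f fun a b => (hrs a b).mp) := by
  refine ⟨fun x y hxy => ?_, fun y => ?_⟩
  · induction x using Quot.ind with | _ a =>
    induction y using Quot.ind with | _ b =>
    have hxy' : Quot.mk s (f a) = Quot.mk s (f b) := hxy
    exact Quot.sound <| (hrs a b).mpr <| hs.eqvGen_iff.mp <| Quot.eqvGen_exact hxy'
  · induction y using Quot.ind with | _ b =>
    obtain ⟨a, hab⟩ := hsurj b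
    exact ⟨Quot.mk r a, Quot.sound (hs.symm hab)⟩

theorem Matrix.SpecialLinearGroup.equivalence_exists_mul_eq {m R : Type*} [Fintype m]
    [DecidableEq m] [CommRing R] (p : Matrix m m R → Prop) :
    Equivalence fun A B : {M // p M} =>
      ∃ γ : SpecialLinearGroup m R, (γ : Matrix m m R) * A.1 = B.1 where
  refl _ := ⟨1, one_mul _⟩
  symm := fun ⟨γ, h⟩ => ⟨γ⁻¹, by rw [← h, ← mul_assoc, ← coe_mul, inv_mul_cancel, coe_one, one_mul]⟩
  trans := fun ⟨γ, h⟩ ⟨δ, h'⟩ => ⟨δ * γ, by rw [coe_mul, mul_assoc, h, h']⟩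

theorem Int.exists_isCoprime_add_mul {c d m : ℤ} (hc : c ≠ 0)
    (h : IsCoprime (Int.gcd c d : ℤ) m) : ∃ r, IsCoprime c (d + m * r) := by
  classical
  set r : ℤ := ∏ p ∈ c.natAbs.primeFactors.filter (fun p : ℕ => ¬ (p : ℤ) ∣ d), (p : ℤ)
  have dvd_r_iff : ∀ z : ℤ, Prime z → z ∣ c → (z ∣ r ↔ ¬ z ∣ d) := by
    intro z hz hzc
    have hz' : z.natAbs.Prime := Int.prime_iff_natAbs_prime.mp hz
    constructor
    · intro hzr
      obtain ⟨p, hp, hzp⟩ := hz.exists_mem_finset_dvd hzr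
      rw [Finset.mem_filter, Nat.mem_primeFactors] at hp
      have hzp' : z.natAbs = p :=
        (Nat.prime_dvd_prime_iff_eq hz' hp.1.1).mp (by simpa using Int.natAbs_dvd_natAbs.mpr hzp)
      rw [← Int.natAbs_dvd, hzp']
      exact hp.2
    · intro hzd
      rw [← Int.natAbs_dvd]
      refine Finset.dvd_prod_of_mem _ (Finset.mem_filter.mpr ⟨?_, by rwa [Int.natAbs_dvd]⟩)
      exact Nat.mem_primeFactors.mpr ⟨hz', Int.natAbs_dvd_natAbs.mpr hzc, Int.natAbs_ne_zero.mpr hc⟩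
  refine ⟨r, isCoprime_of_prime_dvd (fun h0 => hc h0.1) fun z hz hzc hzd' => ?_⟩
  by_cases hzd : z ∣ d
  · have hzm : ¬ z ∣ m := fun hzm => hz.not_isUnit (h.isUnit_of_dvd' (Int.dvd_coe_gcd hzc hzd) hzm)
    have hzr : z ∣ r := (hz.dvd_or_dvd ((dvd_add_right hzd).mp hzd')).resolve_left hzm
    exact (dvd_r_iff z hz hzc).mp hzr hzd
  · exact hzd ((dvd_add_left (((dvd_r_iff z hz hzc).mpr hzd).mul_left m)).mp hzd')

theorem ZMod.exists_isCoprime_intCast_eq (N : ℕ) {x y : ZMod N} (h : IsCoprime x y) :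
    ∃ c d : ℤ, IsCoprime c d ∧ (c : ZMod N) = x ∧ (d : ZMod N) = y := by
  obtain rfl | hN := eq_or_ne N 0
  · exact ⟨x, y, h, Int.cast_id, Int.cast_id⟩
  have : NeZero N := ⟨hN⟩
  obtain ⟨u, v, huv⟩ := h
  -- adding `N` keeps the lift of `x` nonzero, as `Int.exists_isCoprime_add_mul` requires
  set c : ℤ := x.val + N
  have hc : (c : ZMod N) = x := by simp [c]
  have hd : ((y.val : ℤ) : ZMod N) = y := by simp
  have hgcd : IsCoprime (Int.gcd c y.val : ℤ) N := by
    have hunit : IsUnit ((u.val * c + v.val * y.val : ℤ) : ZMod N) := by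
      push_cast; simp [hc, huv]
    have hdvd : (Int.gcd c y.val : ℤ) ∣ u.val * c + v.val * y.val :=
      dvd_add ((Int.gcd_dvd_left c y.val).mul_left _) ((Int.gcd_dvd_right c y.val).mul_left _)
    exact ((ZMod.coe_int_isUnit_iff_isCoprime _ N).mp hunit).symm.of_isCoprime_of_dvd_left hdvd
  obtain ⟨r, hr⟩ := Int.exists_isCoprime_add_mul (by positivity) hgcd
  exact ⟨c, y.val + N * r, hr, hc, by simp⟩

theorem Matrix.SpecialLinearGroup.map_intCast_surjective (N : ℕ) :
    Function.Surjective (SpecialLinearGroup.map (Int.castRingHom (ZMod N)) :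
      SpecialLinearGroup (Fin 2) ℤ →* SpecialLinearGroup (Fin 2) (ZMod N)) := by
  intro M
  have hdet : M 0 0 * M 1 1 - M 0 1 * M 1 0 = 1 := by rw [← det_fin_two]; exact M.det_coe
  obtain ⟨c, d, ⟨u, v, huv⟩, hc, hd⟩ :=
    ZMod.exists_isCoprime_intCast_eq N (x := M 1 0) (y := M 1 1)
      ⟨-M 0 1, M 0 0, by linear_combination hdet⟩
  -- the top rows completing `(c, d)` to determinant one are `(v + t c, -u + t d)`; using
  -- `uc + vd = 1` and `M₀₀ M₁₁ - M₀₁ M₁₀ = 1`, this `t` makes them reduce to the top row of `M`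
  obtain ⟨t, ht⟩ := ZMod.intCast_surjective (M 0 1 * (v : ZMod N) + M 0 0 * (u : ZMod N))
  let γ : SpecialLinearGroup (Fin 2) ℤ :=
    ⟨!![v + t * c, -u + t * d; c, d], by rw [det_fin_two_of]; linear_combination huv⟩
  refine ⟨γ, ?_⟩
  have huv' : (u : ZMod N) * M 1 0 + v * M 1 1 = 1 := by
    rw [← hc, ← hd]; exact_mod_cast congrArg (Int.cast : ℤ → ZMod N) huv
  refine Subtype.ext ?_
  rw [SpecialLinearGroup.map_apply_coe, RingHom.mapMatrix_apply]
  ext i j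
  fin_cases i <;> fin_cases j <;> simp [γ, ht, hc, hd]
  · linear_combination M 0 0 * huv' - v * hdet
  · linear_combination M 0 1 * huv' + u * hdet

theorem ReducesInto.of_mul_eq {N : ℕ} {D : Subgroup (GL (Fin 2) (ZMod N))}
    {A B C : Matrix (Fin 2) (Fin 2) ℤ} (hA : ReducesInto N D A) (hB : ReducesInto N D B)
    (h : C * A = B) : ReducesInto N D C := by
  obtain ⟨g, hg, hgA⟩ := hA
  obtain ⟨k, hk, hkB⟩ := hB
  refine ⟨k * g⁻¹, D.mul_mem hk (D.inv_mem hg), ?_⟩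
  have hC : C.map (fun a : ℤ => (a : ZMod N)) * g = k := by
    rw [hgA, hkB, ← h, map_mul_intCast]
  rw [Units.val_mul, ← hC, mul_assoc, ← Units.val_mul, mul_inv_cancel, Units.val_one, mul_one]

theorem ReducesInto.exists_mul_of_det_eq {N : ℕ} {D : Subgroup (GL (Fin 2) (ZMod N))}
    {A B : Matrix (Fin 2) (Fin 2) ℤ} (hA : ReducesInto N D A)
    (hdet : A.det = B.det) (hunit : IsUnit (B.det : ZMod N)) :
    ∃ γ : SpecialLinearGroup (Fin 2) ℤ, ReducesInto N D ((γ : Matrix (Fin 2) (Fin 2) ℤ) * B) := by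
  obtain ⟨g, hg, hgA⟩ := hA
  set B' := B.map (fun a : ℤ => (a : ZMod N))
  have hB'det : B'.det = (B.det : ZMod N) := (RingHom.map_det (Int.castRingHom (ZMod N)) B).symm
  have hgdet : (g : Matrix (Fin 2) (Fin 2) (ZMod N)).det = (B.det : ZMod N) := by
    rw [hgA, ← hdet]; exact (RingHom.map_det (Int.castRingHom (ZMod N)) A).symm
  have hdet1 : ((g : Matrix (Fin 2) (Fin 2) (ZMod N)) * B'⁻¹).det = 1 := by
    rw [det_mul, det_nonsing_inv, hgdet, hB'det, Ring.mul_inverse_cancel _ hunit]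
  obtain ⟨γ, hγ⟩ := SpecialLinearGroup.map_intCast_surjective N ⟨_, hdet1⟩
  refine ⟨γ, g, hg, ?_⟩
  have hγ' : (γ : Matrix (Fin 2) (Fin 2) ℤ).map (fun a : ℤ => (a : ZMod N)) = g * B'⁻¹ :=
    congrArg Subtype.val hγ
  rw [map_mul_intCast, hγ', mul_assoc, nonsing_inv_mul _ (hB'det ▸ hunit), mul_one]

theorem stmt_18_general (N : ℕ) (n : ℤ) (hn : Int.gcd n N = 1)
    (D : Subgroup (GL (Fin 2) (ZMod N)))
    (hne : ∃ A : Matrix (Fin 2) (Fin 2) ℤ, ReducesInto N D A ∧ A.det = n) :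
    ∃ f : Quot (fun A B : {M : Matrix (Fin 2) (Fin 2) ℤ // ReducesInto N D M ∧ M.det = n} =>
          ∃ γ : Matrix.SpecialLinearGroup (Fin 2) ℤ,
            ReducesInto N D (γ : Matrix (Fin 2) (Fin 2) ℤ) ∧
            (γ : Matrix (Fin 2) (Fin 2) ℤ) * A.1 = B.1) →
        Quot (fun A B : {M : Matrix (Fin 2) (Fin 2) ℤ // M.det = n} =>
          ∃ γ : Matrix.SpecialLinearGroup (Fin 2) ℤ,
            (γ : Matrix (Fin 2) (Fin 2) ℤ) * A.1 = B.1),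
      Function.Bijective f ∧
      ∀ A : {M : Matrix (Fin 2) (Fin 2) ℤ // ReducesInto N D M ∧ M.det = n},
        f (Quot.mk _ A) = Quot.mk _ ⟨A.1, A.2.2⟩ := by
  obtain ⟨A₀, hA₀, hdetA₀⟩ := hne
  have hunit : IsUnit (n : ZMod N) := (ZMod.coe_int_isUnit_iff_isCoprime n N).mpr
    (Int.isCoprime_iff_gcd_eq_one.mpr (by rwa [Int.gcd_comm]))
  have hs := SpecialLinearGroup.equivalence_exists_mul_eq
    fun M : Matrix (Fin 2) (Fin 2) ℤ => M.det = n
  have hrel : ∀ A B : {M : Matrix (Fin 2) (Fin 2) ℤ // ReducesInto N D M ∧ M.det = n},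
      (∃ γ : SpecialLinearGroup (Fin 2) ℤ, ReducesInto N D (γ : Matrix (Fin 2) (Fin 2) ℤ) ∧
        (γ : Matrix (Fin 2) (Fin 2) ℤ) * A.1 = B.1) ↔
      ∃ γ : SpecialLinearGroup (Fin 2) ℤ, (γ : Matrix (Fin 2) (Fin 2) ℤ) * A.1 = B.1 :=
    fun A B => ⟨fun ⟨γ, _, h⟩ => ⟨γ, h⟩, fun ⟨γ, h⟩ => ⟨γ, A.2.1.of_mul_eq B.2.1 h, h⟩⟩
  have hsurj : ∀ B : {M : Matrix (Fin 2) (Fin 2) ℤ // M.det = n},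
      ∃ A : {M : Matrix (Fin 2) (Fin 2) ℤ // ReducesInto N D M ∧ M.det = n},
        ∃ γ : SpecialLinearGroup (Fin 2) ℤ, (γ : Matrix (Fin 2) (Fin 2) ℤ) * B.1 = A.1 := by
    intro ⟨B, hB⟩
    obtain ⟨γ, hγ⟩ := hA₀.exists_mul_of_det_eq (hdetA₀.trans hB.symm) (hB ▸ hunit)
    exact ⟨⟨_, hγ, by simp [hB]⟩, γ, rfl⟩
  exact ⟨_, Quot.map_bijective hs (Subtype.map id fun _ => And.right) hrel hsurj, fun _ => rfl⟩

theorem stmt_18 (N : ℕ) (hN : 1 ≤ N) (n : ℤ) (hn : Int.gcd n N = 1)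
    (D : Subgroup (GL (Fin 2) (ZMod N)))
    (hne : ∃ A : Matrix (Fin 2) (Fin 2) ℤ, ReducesInto N D A ∧ A.det = n) :
    ∃ f : Quot (fun A B : {M : Matrix (Fin 2) (Fin 2) ℤ // ReducesInto N D M ∧ M.det = n} =>
          ∃ γ : Matrix.SpecialLinearGroup (Fin 2) ℤ,
            ReducesInto N D (γ : Matrix (Fin 2) (Fin 2) ℤ) ∧
            (γ : Matrix (Fin 2) (Fin 2) ℤ) * A.1 = B.1) →
        Quot (fun A B : {M : Matrix (Fin 2) (Fin 2) ℤ // M.det = n} =>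
          ∃ γ : Matrix.SpecialLinearGroup (Fin 2) ℤ,
            (γ : Matrix (Fin 2) (Fin 2) ℤ) * A.1 = B.1),
      Function.Bijective f ∧
      ∀ A : {M : Matrix (Fin 2) (Fin 2) ℤ // ReducesInto N D M ∧ M.det = n},
        f (Quot.mk _ A) = Quot.mk _ ⟨A.1, A.2.2⟩ :=
  stmt_18_general N n hn D hne
end
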